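/- arXiv:2209.11023 — 3 statements merged into one kernel-verified Lean document; each statement's English description precedes it below -/
import Mathlib

section
/- Let A be an n×n real positive semidefinite matrix with spectral decomposition A = U Λ Uᵀ, where U is orthogonal and Λ = diag(λ₁,…,λₙ) with λ₁ ≥ … ≥ λₙ ≥ 0, and let f : ℝ → ℝ be monotonically increasing on [0,∞) with f(x) ≥ 0 for all x ≥ 0. Fix 1 ≤ k ≤ n, let U₁ be the n×k matrix of the first k columns of U and Λ₁ = diag(λ₁,…,λ_k). Then U₁ f(Λ₁) U₁ᵀ is a best rank-k approximation of f(A) in the Frobenius norm: for every n×n real matrix B with rank(B) ≤ k one has ‖f(A) − U₁ f(Λ₁) U₁ᵀ‖_F ≤ ‖f(A) − B‖_F. If in addition f(0) = 0, then f(U₁ Λ₁ U₁ᵀ) = U₁ f(Λ₁) U₁ᵀ. -/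
open Matrix MeasureTheory ProbabilityTheory
open scoped ENNReal

namespace FunNystrom

/-- Frobenius norm of a real matrix. -/
noncomputable def frob {m k : Type*} [Fintype m] [Fintype k] (M : Matrix m k ℝ) : ℝ :=
  Real.sqrt (∑ i, ∑ j, (M i j) ^ 2)

/-- Spectral norm (the ℓ²→ℓ² operator norm) of a real matrix. -/
noncomputable def specNorm {m k : Type*} [Fintype m] [Fintype k] [DecidableEq k]
    (M : Matrix m k ℝ) : ℝ :=
  ‖LinearMap.toContinuousLinearMap (Matrix.toEuclideanLin M)‖

/-- Schatten-`s` norm of a real matrix: the `ℓˢ` norm of its singular values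
(the square roots of the eigenvalues of `Mᴴ * M`). -/
noncomputable def schatten {m k : Type*} [Fintype m] [Fintype k] [DecidableEq k]
    (s : ℝ) (M : Matrix m k ℝ) : ℝ :=
  (∑ i, Real.sqrt ((Matrix.isHermitian_conjTranspose_mul_self M).eigenvalues i) ^ s) ^ s⁻¹

/-- `fB = f(B)`: the matrix function `f` applied to the symmetric matrix `B`, i.e.
`fB = V f(D) Vᵀ` for a spectral decomposition `B = V D Vᵀ` (the continuous
functional calculus, applied entrywise to the diagonal of `D`). -/
def IsMatFun {n : Type*} [Fintype n] [DecidableEq n]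
    (f : ℝ → ℝ) (B fB : Matrix n n ℝ) : Prop :=
  ∃ (V : Matrix n n ℝ) (d : n → ℝ),
    V * Vᵀ = 1 ∧ Vᵀ * V = 1 ∧
    B = V * Matrix.diagonal d * Vᵀ ∧
    fB = V * Matrix.diagonal (fun i => f (d i)) * Vᵀ

/-- `f` is operator monotone on `[0,∞)`: for all `m ≥ 1` and all `m × m` PSD
matrices `B ⪰ C` one has `f(B) ⪰ f(C)`. -/
def OpMonotoneOn (f : ℝ → ℝ) : Prop :=
  ∀ (m : ℕ) (B C fB fC : Matrix (Fin m) (Fin m) ℝ),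
    B.PosSemidef → C.PosSemidef → (B - C).PosSemidef →
    IsMatFun f B fB → IsMatFun f C fC → (fB - fC).PosSemidef

/-- `P` is the orthogonal projection onto the column space of `M`:
the unique symmetric idempotent matrix whose column space equals `range M`. -/
def IsProjOnto {n m : Type*} [Fintype n] [Fintype m] [DecidableEq n]
    (P : Matrix n n ℝ) (M : Matrix n m ℝ) : Prop :=
  Pᵀ = P ∧ P * P = P ∧
  LinearMap.range P.mulVecLin = LinearMap.range M.mulVecLin

/-- `A^r = U Λ^r Uᵀ` for the spectral decomposition `A = U Λ Uᵀ`
(diagonal entries raised to the `r`-th power). -/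
noncomputable def apow {n : ℕ} (U : Matrix (Fin n) (Fin n) ℝ) (lam : Fin n → ℝ)
    (r : ℝ) : Matrix (Fin n) (Fin n) ℝ :=
  U * Matrix.diagonal (fun i => lam i ^ r) * Uᵀ

/-- The index `k + i` in `Fin n`, for `i : Fin (n - k)`. -/
def tailIdx {n k : ℕ} (hkn : k < n) (i : Fin (n - k)) : Fin n :=
  ⟨k + i.1, by have := i.2; omega⟩

instance matMeasurableSpace {m k : Type*} : MeasurableSpace (Matrix m k ℝ) :=
  inferInstanceAs (MeasurableSpace (m → k → ℝ))

/-- The law of an `n × m` random matrix with i.i.d. standard Gaussian `N(0,1)`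
entries: the product over all entries of the standard Gaussian measure on `ℝ`. -/
noncomputable def gaussianMatrix (n m : ℕ) : Measure (Matrix (Fin n) (Fin m) ℝ) :=
  Measure.pi fun _ : Fin n => Measure.pi fun _ : Fin m => gaussianReal 0 1


noncomputable def frobSq {m k : Type*} [Fintype m] [Fintype k] (M : Matrix m k ℝ) : ℝ :=
  ∑ i, ∑ j, (M i j) ^ 2

lemma frobSq_eq_trace {m k : Type*} [Fintype m] [Fintype k] (M : Matrix m k ℝ) :
    frobSq M = Matrix.trace (Mᵀ * M) := by
  unfold frobSq Matrix.trace
  rw [Finset.sum_comm]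
  simp [Matrix.mul_apply, Matrix.diag, sq]

lemma frobSq_nonneg {m k : Type*} [Fintype m] [Fintype k] (M : Matrix m k ℝ) :
    0 ≤ frobSq M := by
  apply Finset.sum_nonneg; intro i _; apply Finset.sum_nonneg; intro j _; positivity

lemma frobSq_mul_proj {n : ℕ} (Y Q : Matrix (Fin n) (Fin n) ℝ)
    (hQt : Qᵀ = Q) (hQQ : Q * Q = Q) :
    frobSq (Y * Q) = Matrix.trace (Yᵀ * Y * Q) := by
  rw [frobSq_eq_trace, Matrix.transpose_mul, hQt]
  have : Q * Yᵀ * (Y * Q) = (Q * (Yᵀ * Y)) * Q := by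
    simp only [Matrix.mul_assoc]
  rw [this, Matrix.trace_mul_comm, ← Matrix.mul_assoc, hQQ, Matrix.trace_mul_comm]

-- contraction: frobSq (Y * P) ≤ frobSq Y for symmetric idempotent P
lemma frobSq_mul_proj_le {n : ℕ} (Y P : Matrix (Fin n) (Fin n) ℝ)
    (hPt : Pᵀ = P) (hPP : P * P = P) : frobSq (Y * P) ≤ frobSq Y := by
  have hQt : (1 - P)ᵀ = 1 - P := by rw [Matrix.transpose_sub, hPt, Matrix.transpose_one]
  have hQQ : (1 - P) * (1 - P) = 1 - P := by
    rw [Matrix.sub_mul, Matrix.mul_sub, Matrix.mul_sub, hPP]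
    simp
  have h1 := frobSq_mul_proj Y P hPt hPP
  have h2 := frobSq_mul_proj Y (1 - P) hQt hQQ
  have h3 : frobSq Y = frobSq (Y * P) + frobSq (Y * (1 - P)) := by
    rw [h1, h2, Matrix.mul_sub, Matrix.mul_one, Matrix.trace_sub, frobSq_eq_trace]
    ring
  linarith [frobSq_nonneg (Y * (1 - P))]

lemma sandwich_mul {n : ℕ} (U : Matrix (Fin n) (Fin n) ℝ) (hU' : Uᵀ * U = 1)
    (a b : Fin n → ℝ) :
    (U * Matrix.diagonal a * Uᵀ) * (U * Matrix.diagonal b * Uᵀ)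
      = U * Matrix.diagonal (fun i => a i * b i) * Uᵀ := by
  calc (U * Matrix.diagonal a * Uᵀ) * (U * Matrix.diagonal b * Uᵀ)
      = U * Matrix.diagonal a * (Uᵀ * U) * Matrix.diagonal b * Uᵀ := by
        simp only [Matrix.mul_assoc]
    _ = U * (Matrix.diagonal a * Matrix.diagonal b) * Uᵀ := by
        rw [hU']; simp only [Matrix.mul_assoc, Matrix.one_mul]
    _ = _ := by rw [Matrix.diagonal_mul_diagonal]

lemma trace_sandwich {n : ℕ} (U : Matrix (Fin n) (Fin n) ℝ) (hU' : Uᵀ * U = 1)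
    (a : Fin n → ℝ) :
    Matrix.trace (U * Matrix.diagonal a * Uᵀ) = ∑ i, a i := by
  rw [Matrix.trace_mul_comm, ← Matrix.mul_assoc, hU', Matrix.one_mul, Matrix.trace_diagonal]

lemma transpose_sandwich {n : ℕ} (U : Matrix (Fin n) (Fin n) ℝ) (a : Fin n → ℝ) :
    (U * Matrix.diagonal a * Uᵀ)ᵀ = U * Matrix.diagonal a * Uᵀ := by
  simp [Matrix.transpose_mul, Matrix.mul_assoc]

lemma frobSq_sandwich {n : ℕ} (U : Matrix (Fin n) (Fin n) ℝ) (hU' : Uᵀ * U = 1)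
    (a : Fin n → ℝ) :
    frobSq (U * Matrix.diagonal a * Uᵀ) = ∑ i, a i ^ 2 := by
  rw [frobSq_eq_trace, transpose_sandwich, sandwich_mul U hU', trace_sandwich U hU']
  simp [sq]


lemma exists_proj {n : ℕ} (B : Matrix (Fin n) (Fin n) ℝ) :
    ∃ P : Matrix (Fin n) (Fin n) ℝ,
      Pᵀ = P ∧ P * P = P ∧ B * P = 0 ∧
      P.trace = (Module.finrank ℝ (LinearMap.ker B.mulVecLin) : ℝ) := by
  set e := (WithLp.linearEquiv 2 ℝ (Fin n → ℝ)).symm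
  set K : Submodule ℝ (EuclideanSpace ℝ (Fin n)) :=
    (LinearMap.ker B.mulVecLin).map e.toLinearMap with hK
  have hfr : Module.finrank ℝ K = Module.finrank ℝ (LinearMap.ker B.mulVecLin) :=
    (LinearEquiv.finrank_eq (e.submoduleMap _)).symm
  set d := Module.finrank ℝ K
  have : FiniteDimensional ℝ K := inferInstance
  set b := stdOrthonormalBasis ℝ K
  set v : Fin d → (Fin n → ℝ) := fun l => (b l : EuclideanSpace ℝ (Fin n)) with hv
  have hker : ∀ l, B.mulVec (v l) = 0 := by
    intro l
    have hmem : (b l : EuclideanSpace ℝ (Fin n)) ∈ K := (b l).2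
    obtain ⟨y, hy, hyx⟩ := Submodule.mem_map.1 hmem
    have : v l = y := by
      show (↑(b l) : EuclideanSpace ℝ (Fin n)).ofLp = y
      rw [← hyx]; rfl
    rw [this]
    exact hy
  have horth : ∀ l l', ∑ m, v l m * v l' m = if l = l' then 1 else 0 := by
    intro l l'
    have := b.orthonormal
    rw [orthonormal_iff_ite] at this
    have h2 := this l l'
    rw [Submodule.coe_inner, PiLp.inner_apply] at h2
    simp [RCLike.inner_apply] at h2
    refine Eq.trans ?_ h2
    exact Finset.sum_congr rfl fun m _ => mul_comm _ _
  refine ⟨Matrix.of fun i j => ∑ l, v l i * v l j, ?_, ?_, ?_, ?_⟩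
  · ext i j; simp [Matrix.transpose_apply, mul_comm]
  · ext i j
    simp only [Matrix.mul_apply, Matrix.of_apply]
    calc ∑ x, (∑ l, v l i * v l x) * (∑ l', v l' x * v l' j)
        = ∑ x, ∑ l, ∑ l', (v l i * v l x) * (v l' x * v l' j) := by
          simp_rw [Finset.sum_mul, Finset.mul_sum]
      _ = ∑ l, ∑ l', ∑ x, (v l i * v l x) * (v l' x * v l' j) := by
          rw [Finset.sum_comm]
          exact Finset.sum_congr rfl fun l _ => Finset.sum_comm
      _ = ∑ l, ∑ l', (v l i * v l' j) * (∑ x, v l x * v l' x) := by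
          refine Finset.sum_congr rfl fun l _ => Finset.sum_congr rfl fun l' _ => ?_
          rw [Finset.mul_sum]
          exact Finset.sum_congr rfl fun x _ => by ring
      _ = ∑ l, ∑ l', (v l i * v l' j) * (if l = l' then 1 else 0) := by
          simp_rw [horth]
      _ = ∑ l, v l i * v l j := by
          refine Finset.sum_congr rfl fun l _ => ?_
          simp
  · ext i j
    simp only [Matrix.mul_apply, Matrix.of_apply, Matrix.zero_apply]
    calc ∑ x, B i x * ∑ l, v l x * v l j
        = ∑ l, ∑ x, B i x * (v l x * v l j) := by
          simp_rw [Finset.mul_sum]; exact Finset.sum_comm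
      _ = ∑ l, (B.mulVec (v l) i) * v l j := by
          refine Finset.sum_congr rfl fun l _ => ?_
          rw [Matrix.mulVec, dotProduct, Finset.sum_mul]
          exact Finset.sum_congr rfl fun x _ => by ring
      _ = 0 := by simp [hker]
  · rw [Matrix.trace]
    simp only [Matrix.diag_apply, Matrix.of_apply]
    rw [Finset.sum_comm]
    have : ∀ l, ∑ i, v l i * v l i = 1 := by
      intro l; have := horth l l; simpa using this
    simp_rw [this]
    simp [hfr]



lemma card_tail {n k : ℕ} (hkn : k ≤ n) :
    (Finset.univ.filter (fun i : Fin n => k ≤ i.1)).card = n - k := by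
  have : (Finset.univ.filter (fun i : Fin n => k ≤ i.1))
      = Finset.map ⟨fun j : Fin (n - k) => (⟨k + j.1, by omega⟩ : Fin n),
          fun a b hab => by
            simp only [Fin.mk.injEq] at hab
            exact Fin.ext (by omega)⟩ Finset.univ := by
    ext i
    simp only [Finset.mem_filter, Finset.mem_univ, true_and, Finset.mem_map,
      Function.Embedding.coeFn_mk]
    constructor
    · intro hi
      exact ⟨⟨i.1 - k, by omega⟩, Fin.ext (by show k + (i.1 - k) = i.1; omega)⟩
    · rintro ⟨j, -, rfl⟩; exact Nat.le_add_right k j.1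
  rw [this, Finset.card_map, Finset.card_univ, Fintype.card_fin]

lemma key_sum {n k : ℕ} (hkn : k ≤ n) (μ q : Fin n → ℝ)
    (hμ : Antitone μ) (hμ0 : ∀ i, 0 ≤ μ i) (hq0 : ∀ i, 0 ≤ q i) (hq1 : ∀ i, q i ≤ 1)
    (hsum : (n : ℝ) - k ≤ ∑ i, q i) :
    ∑ i ∈ Finset.univ.filter (fun i : Fin n => k ≤ i.1), μ i ≤ ∑ i, μ i * q i := by
  set S := Finset.univ.filter (fun i : Fin n => k ≤ i.1) with hS
  rcases le_or_gt n k with hnk | hnk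
  · have hSe : S = ∅ := by
      rw [hS]; ext i; simp only [Finset.mem_filter, Finset.mem_univ, true_and,
        Finset.notMem_empty, iff_false]
      omega
    rw [hSe, Finset.sum_empty]
    exact Finset.sum_nonneg fun i _ => mul_nonneg (hμ0 i) (hq0 i)
  · set t := μ ⟨k, hnk⟩ with ht
    have ht0 : 0 ≤ t := hμ0 _
    have hsplit : ∑ i, μ i * q i
        = ∑ i ∈ S, μ i * q i + ∑ i ∈ Sᶜ, μ i * q i :=
      (Finset.sum_add_sum_compl S _).symm
    have hcard : (S.card : ℝ) = (n : ℝ) - k := by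
      rw [hS, card_tail hkn, Nat.cast_sub hkn]
    -- ∑_S (1 - q) ≤ ∑_{Sᶜ} q
    have hA : ∑ i ∈ S, (1 - q i) ≤ ∑ i ∈ Sᶜ, q i := by
      have h1 : ∑ i ∈ S, (1 - q i) = (S.card : ℝ) - ∑ i ∈ S, q i := by
        rw [Finset.sum_sub_distrib]; simp
      have h2 : ∑ i ∈ Sᶜ, q i = (∑ i, q i) - ∑ i ∈ S, q i := by
        rw [← Finset.sum_add_sum_compl S q]; ring
      rw [h1, h2, hcard]
      linarith
    have hB : ∑ i ∈ S, μ i * (1 - q i) ≤ t * ∑ i ∈ S, (1 - q i) := by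
      rw [Finset.mul_sum]
      refine Finset.sum_le_sum fun i hi => ?_
      have hik : k ≤ i.1 := by simpa [hS] using hi
      have : μ i ≤ t := hμ (by exact Fin.mk_le_of_le_val hik)
      exact mul_le_mul_of_nonneg_right this (by linarith [hq1 i])
    have hC : t * ∑ i ∈ Sᶜ, q i ≤ ∑ i ∈ Sᶜ, μ i * q i := by
      rw [Finset.mul_sum]
      refine Finset.sum_le_sum fun i hi => ?_
      have hik : i.1 < k := by
        simp only [hS, Finset.mem_compl, Finset.mem_filter, Finset.mem_univ, true_and,
          not_le] at hi
        exact hi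
      have : t ≤ μ i := hμ (by exact Fin.le_def.mpr (by simp; omega))
      exact mul_le_mul_of_nonneg_right this (hq0 i)
    have hD : t * ∑ i ∈ S, (1 - q i) ≤ t * ∑ i ∈ Sᶜ, q i :=
      mul_le_mul_of_nonneg_left hA ht0
    have hE : ∑ i ∈ S, μ i - ∑ i ∈ S, μ i * q i = ∑ i ∈ S, μ i * (1 - q i) := by
      rw [← Finset.sum_sub_distrib]
      exact Finset.sum_congr rfl fun i _ => by ring
    rw [hsplit]
    linarith



-- functional calculus well-definedness
lemma funcalc_welldef {n : ℕ} (f : ℝ → ℝ) (V₁ V₂ : Matrix (Fin n) (Fin n) ℝ)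
    (d₁ d₂ : Fin n → ℝ)
    (h₁ : V₁ * V₁ᵀ = 1) (h₁' : V₁ᵀ * V₁ = 1)
    (h₂ : V₂ * V₂ᵀ = 1) (h₂' : V₂ᵀ * V₂ = 1)
    (h : V₁ * Matrix.diagonal d₁ * V₁ᵀ = V₂ * Matrix.diagonal d₂ * V₂ᵀ) :
    V₁ * Matrix.diagonal (fun i => f (d₁ i)) * V₁ᵀ
      = V₂ * Matrix.diagonal (fun i => f (d₂ i)) * V₂ᵀ := by
  set W := V₂ᵀ * V₁ with hW
  have hVW : V₂ * W = V₁ := by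
    rw [hW, ← Matrix.mul_assoc, h₂, Matrix.one_mul]
  have hWW : W * W ᵀ = 1 := by
    rw [hW, Matrix.transpose_mul, Matrix.transpose_transpose, Matrix.mul_assoc,
      ← Matrix.mul_assoc V₁, h₁, Matrix.one_mul, h₂']
  have hcomm : W * Matrix.diagonal d₁ = Matrix.diagonal d₂ * W := by
    have step : W * Matrix.diagonal d₁ * V₁ᵀ * V₂ = Matrix.diagonal d₂ * (V₂ᵀ * V₂) := by
      calc W * Matrix.diagonal d₁ * V₁ᵀ * V₂
          = V₂ᵀ * (V₁ * Matrix.diagonal d₁ * V₁ᵀ) * V₂ := by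
            rw [hW]; simp only [Matrix.mul_assoc]
        _ = V₂ᵀ * (V₂ * Matrix.diagonal d₂ * V₂ᵀ) * V₂ := by rw [h]
        _ = (V₂ᵀ * V₂) * Matrix.diagonal d₂ * (V₂ᵀ * V₂) := by
            simp only [Matrix.mul_assoc]
        _ = Matrix.diagonal d₂ * (V₂ᵀ * V₂) := by rw [h₂', Matrix.one_mul]
    have := congrArg (fun X => X * V₂ᵀ) step
    rw [h₂'] at step
    calc W * Matrix.diagonal d₁
        = W * Matrix.diagonal d₁ * (V₁ᵀ * V₁) := by rw [h₁', Matrix.mul_one]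
      _ = W * Matrix.diagonal d₁ * (V₁ᵀ * (V₂ * W)) := by rw [hVW]
      _ = (W * Matrix.diagonal d₁ * V₁ᵀ * V₂) * W := by simp only [Matrix.mul_assoc]
      _ = Matrix.diagonal d₂ * W := by
          rw [step, Matrix.mul_one]
  have hentry : ∀ i j, W i j * d₁ j = d₂ i * W i j := by
    intro i j
    have := congrFun (congrFun hcomm i) j
    simpa [Matrix.mul_diagonal, Matrix.diagonal_mul] using this
  have hfcomm : W * Matrix.diagonal (fun i => f (d₁ i))
      = Matrix.diagonal (fun i => f (d₂ i)) * W := by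
    ext i j
    simp only [Matrix.mul_diagonal, Matrix.diagonal_mul]
    rcases eq_or_ne (W i j) 0 with h0 | h0
    · rw [h0]; ring
    · have hd : d₁ j = d₂ i := by
        have h' : W i j * d₁ j = W i j * d₂ i := by rw [hentry i j]; ring
        exact mul_left_cancel₀ h0 h'
      rw [hd]; ring
  calc V₁ * Matrix.diagonal (fun i => f (d₁ i)) * V₁ᵀ
      = V₂ * (W * Matrix.diagonal (fun i => f (d₁ i)) * Wᵀ) * V₂ᵀ := by
        rw [← hVW]; simp only [Matrix.transpose_mul, Matrix.mul_assoc]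
    _ = V₂ * (Matrix.diagonal (fun i => f (d₂ i)) * (W * Wᵀ)) * V₂ᵀ := by
        rw [hfcomm]; simp only [Matrix.mul_assoc]
    _ = _ := by rw [hWW, Matrix.mul_one]



lemma sandwich_apply {n m : Type*} [Fintype n] [Fintype m] [DecidableEq m]
    (A B : Matrix n m ℝ) (w : m → ℝ) (i j : n) :
    (A * Matrix.diagonal w * Bᵀ) i j = ∑ l, A i l * w l * B j l := by
  rw [Matrix.mul_apply]
  refine Finset.sum_congr rfl fun l _ => ?_
  rw [Matrix.mul_diagonal, Matrix.transpose_apply]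

lemma sandwich_restrict {n k : ℕ} (hkn : k ≤ n)
    (U : Matrix (Fin n) (Fin n) ℝ)
    (U₁ : Matrix (Fin n) (Fin k) ℝ)
    (hU₁ : ∀ i j, U₁ i j = U i ⟨j.1, lt_of_lt_of_le j.2 hkn⟩)
    (g : Fin n → ℝ) :
    U₁ * Matrix.diagonal (fun j : Fin k => g ⟨j.1, lt_of_lt_of_le j.2 hkn⟩) * U₁ᵀ
      = U * Matrix.diagonal (fun i => if i.1 < k then g i else 0) * Uᵀ := by
  ext i j
  rw [sandwich_apply, sandwich_apply]
  have hrhs : ∑ m, U i m * (if m.1 < k then g m else 0) * U j m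
      = ∑ m ∈ Finset.univ.filter (fun m : Fin n => m.1 < k), U i m * g m * U j m := by
    rw [Finset.sum_filter]
    refine Finset.sum_congr rfl fun m _ => ?_
    split <;> ring
  rw [hrhs]
  refine Finset.sum_bij (fun (l : Fin k) _ => (⟨l.1, lt_of_lt_of_le l.2 hkn⟩ : Fin n))
    ?_ ?_ ?_ ?_
  · intro l _; simp [l.2]
  · intro a _ b _ hab
    simp only [Fin.mk.injEq] at hab
    exact Fin.ext hab
  · intro m hm
    simp only [Finset.mem_filter, Finset.mem_univ, true_and] at hm
    exact ⟨⟨m.1, hm⟩, Finset.mem_univ _, rfl⟩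
  · intro l _
    rw [hU₁ i l, hU₁ j l]


/-- `U₁ f(Λ₁) U₁ᵀ` is a best rank-`k` approximation of `f(A)` in the
Frobenius norm; if moreover `f(0) = 0` then `f(U₁ Λ₁ U₁ᵀ) = U₁ f(Λ₁) U₁ᵀ`. -/
theorem best_rank_k_approx_of_matrix_function {n k : ℕ} (hk1 : 1 ≤ k) (hkn : k ≤ n)
    (U : Matrix (Fin n) (Fin n) ℝ) (hU : U * Uᵀ = 1) (hU' : Uᵀ * U = 1)
    (lam : Fin n → ℝ) (hlam : Antitone lam) (hlam0 : ∀ i, 0 ≤ lam i)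
    (f : ℝ → ℝ)
    (hfmono : ∀ x y : ℝ, 0 ≤ x → x ≤ y → f x ≤ f y)
    (hfpos : ∀ x : ℝ, 0 ≤ x → 0 ≤ f x)
    (U₁ : Matrix (Fin n) (Fin k) ℝ)
    (hU₁ : U₁ = Matrix.of fun (i : Fin n) (j : Fin k) => U i ⟨j.1, by have := j.2; omega⟩)
    (fA T : Matrix (Fin n) (Fin n) ℝ)
    (hfA : fA = U * Matrix.diagonal (fun i => f (lam i)) * Uᵀ)
    (hT : T = U₁ * Matrix.diagonal
      (fun j : Fin k => f (lam ⟨j.1, by have := j.2; omega⟩)) * U₁ᵀ) :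
    (∀ B : Matrix (Fin n) (Fin n) ℝ, B.rank ≤ k → frob (fA - T) ≤ frob (fA - B)) ∧
    (f 0 = 0 → ∀ M : Matrix (Fin n) (Fin n) ℝ,
      IsMatFun f (U₁ * Matrix.diagonal
        (fun j : Fin k => lam ⟨j.1, by have := j.2; omega⟩) * U₁ᵀ) M →
      M = T) := by
  -- column-restriction compatibility
  have hU₁' : ∀ i j, U₁ i j = U i ⟨j.1, lt_of_lt_of_le j.2 hkn⟩ := by
    intro i j; rw [hU₁]; rfl
  set d' : Fin n → ℝ := fun i => if i.1 < k then f (lam i) else 0 with hd'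
  have hT' : T = U * Matrix.diagonal d' * Uᵀ := by
    rw [hT]
    exact sandwich_restrict hkn U U₁ hU₁' (fun i => f (lam i))
  set μ : Fin n → ℝ := fun i => (f (lam i)) ^ 2 with hμdef
  have hμ0 : ∀ i, 0 ≤ μ i := fun i => sq_nonneg _
  have hμanti : Antitone μ := by
    intro i j hij
    have h1 : lam j ≤ lam i := hlam hij
    have h2 : 0 ≤ f (lam j) := hfpos _ (hlam0 j)
    have h3 : f (lam j) ≤ f (lam i) := hfmono _ _ (hlam0 j) h1
    simpa [hμdef] using pow_le_pow_left₀ h2 h3 2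
  have hfAT : fA - T = U * Matrix.diagonal (fun i => f (lam i) - d' i) * Uᵀ := by
    rw [hfA, hT', ← Matrix.diagonal_sub, Matrix.mul_sub, Matrix.sub_mul]
  have hfrobT : frobSq (fA - T)
      = ∑ i ∈ Finset.univ.filter (fun i : Fin n => k ≤ i.1), μ i := by
    rw [hfAT, frobSq_sandwich U hU']
    rw [Finset.sum_filter]
    refine Finset.sum_congr rfl fun i _ => ?_
    by_cases h : i.1 < k
    · simp [hd', h, show ¬ k ≤ i.1 by omega]
    · simp [hd', h, show k ≤ i.1 by omega, hμdef]
  constructor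
  · intro B hB
    obtain ⟨P, hPt, hPP, hBP, htr⟩ := exists_proj B
    set Q : Matrix (Fin n) (Fin n) ℝ := Uᵀ * P * U with hQ
    set q : Fin n → ℝ := fun i => Q i i with hq
    -- q bounds
    have hQRR : Q = (P * U)ᵀ * (P * U) := by
      rw [Matrix.transpose_mul, hPt, hQ, Matrix.mul_assoc, Matrix.mul_assoc, ← Matrix.mul_assoc P, hPP]
    have hq0 : ∀ i, 0 ≤ q i := by
      intro i
      rw [hq]
      simp only [hQRR, Matrix.mul_apply, Matrix.transpose_apply]
      exact Finset.sum_nonneg fun m _ => mul_self_nonneg _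
    have hq1 : ∀ i, q i ≤ 1 := by
      intro i
      have hSS : (1 : Matrix (Fin n) (Fin n) ℝ) - Q = ((1 - P) * U)ᵀ * ((1 - P) * U) := by
        have h1 : (1 - P)ᵀ = 1 - P := by rw [Matrix.transpose_sub, hPt, Matrix.transpose_one]
        have h2 : (1 - P) * (1 - P) = 1 - P := by
          rw [Matrix.sub_mul, Matrix.mul_sub, Matrix.mul_sub, hPP]; simp
        rw [Matrix.transpose_mul, h1, Matrix.mul_assoc, ← Matrix.mul_assoc (1 - P), h2,
          Matrix.sub_mul, Matrix.one_mul, Matrix.mul_sub, hU', hQ, Matrix.mul_assoc]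
      have : 0 ≤ (1 - Q) i i := by
        rw [hSS]
        simp only [Matrix.mul_apply, Matrix.transpose_apply]
        exact Finset.sum_nonneg fun m _ => mul_self_nonneg _
      have h1 : ((1 : Matrix (Fin n) (Fin n) ℝ) - Q) i i = 1 - Q i i := by
        simp [Matrix.sub_apply, Matrix.one_apply_eq]
      rw [h1] at this
      rw [hq]; linarith
    have hqsum : (n : ℝ) - k ≤ ∑ i, q i := by
      have htrQ : ∑ i, q i = Matrix.trace P := by
        have : Matrix.trace Q = Matrix.trace (P * (U * Uᵀ)) := by
          rw [hQ, Matrix.mul_assoc, Matrix.trace_mul_comm, Matrix.mul_assoc]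
        rw [show ∑ i, q i = Matrix.trace Q from rfl, this, hU, Matrix.mul_one]
      have hrk : n ≤ Module.finrank ℝ (LinearMap.ker B.mulVecLin) + k := by
        have := LinearMap.finrank_range_add_finrank_ker B.mulVecLin
        rw [Module.finrank_fin_fun] at this
        have hrank : Module.finrank ℝ (LinearMap.range B.mulVecLin) ≤ k := hB
        omega
      rw [htrQ, htr]
      have : ((n : ℝ)) ≤ (Module.finrank ℝ (LinearMap.ker B.mulVecLin) : ℝ) + k := by
        exact_mod_cast hrk
      linarith
    -- trace computation
    have hfAsym : fAᵀ = fA := by rw [hfA]; exact transpose_sandwich U _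
    have hfAfA : fAᵀ * fA = U * Matrix.diagonal μ * Uᵀ := by
      rw [hfAsym, hfA, sandwich_mul U hU']
      congr 1
      · congr 1
        funext i
        rw [hμdef]; ring
    have htrace : Matrix.trace (fAᵀ * fA * P) = ∑ i, μ i * q i := by
      rw [hfAfA]
      have h1 : U * Matrix.diagonal μ * Uᵀ * P = (U * Matrix.diagonal μ) * (Uᵀ * P) := by
        simp only [Matrix.mul_assoc]
      rw [h1, Matrix.trace_mul_comm, show Uᵀ * P * (U * Matrix.diagonal μ)
          = (Uᵀ * P * U) * Matrix.diagonal μ by simp only [Matrix.mul_assoc],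
        Matrix.trace_mul_comm]
      rw [Matrix.trace]
      refine Finset.sum_congr rfl fun i _ => ?_
      rw [Matrix.diag_apply, Matrix.diagonal_mul]
    have hkey := key_sum hkn μ q hμanti hμ0 hq0 hq1 hqsum
    have hstep1 : frobSq ((fA - B) * P) ≤ frobSq (fA - B) :=
      frobSq_mul_proj_le (fA - B) P hPt hPP
    have hstep2 : (fA - B) * P = fA * P := by rw [Matrix.sub_mul, hBP, sub_zero]
    have hstep3 : frobSq (fA * P) = Matrix.trace (fAᵀ * fA * P) :=
      frobSq_mul_proj fA P hPt hPP
    have hfinal : frobSq (fA - T) ≤ frobSq (fA - B) := by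
      rw [hfrobT]
      calc ∑ i ∈ Finset.univ.filter (fun i : Fin n => k ≤ i.1), μ i
          ≤ ∑ i, μ i * q i := hkey
        _ = Matrix.trace (fAᵀ * fA * P) := htrace.symm
        _ = frobSq (fA * P) := hstep3.symm
        _ = frobSq ((fA - B) * P) := by rw [hstep2]
        _ ≤ frobSq (fA - B) := hstep1
    exact Real.sqrt_le_sqrt hfinal
  · intro hf0 M hM
    obtain ⟨V, dv, hV, hV', hAk, hMdef⟩ := hM
    have hAk' : V * Matrix.diagonal dv * Vᵀ
        = U * Matrix.diagonal (fun i => if i.1 < k then lam i else 0) * Uᵀ := by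
      rw [← hAk]
      exact sandwich_restrict hkn U U₁ hU₁' lam
    have hfc := funcalc_welldef f V U dv (fun i => if i.1 < k then lam i else 0)
      hV hV' hU hU' hAk'
    rw [hMdef, hfc, hT']
    refine congrArg (fun dd => U * Matrix.diagonal dd * Uᵀ) ?_
    funext i
    show f (if i.1 < k then lam i else 0) = d' i
    rw [hd']
    by_cases h : i.1 < k <;> simp [h, hf0]


end FunNystrom
end

section
/- Let A be an n×n real PSD matrix, let P be an n×n real symmetric idempotent matrix (an orthogonal projection), and let f : ℝ → ℝ be operator monotone on [0,∞) with f(0) = 0 and f(x) ≥ 0 for all x ≥ 0. Then tr(f(A^{1/2} P A^{1/2})) = tr(f(P A P)), and tr(f(P A P)) ≥ tr(P f(A) P), where A^{1/2} is the PSD square root of A. -/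
open Matrix MeasureTheory ProbabilityTheory
open scoped ENNReal

namespace FunNystrom

set_option linter.unusedSectionVars false

section CP
open Polynomial
variable {n : Type*} [Fintype n] [DecidableEq n]

theorem my_charpoly_mul_comm (M N : Matrix n n ℝ) : (M * N).charpoly = (N * M).charpoly := by
  set R := Polynomial ℝ with hR
  let M' : Matrix n n R := M.map C
  let N' : Matrix n n R := N.map C
  let XI : Matrix n n R := (X : R) • (1 : Matrix n n R)
  have key : ∀ (A B : Matrix n n ℝ), charmatrix (A * B) = XI - A.map C * B.map C := by
    intro A B
    rw [show charmatrix (A * B) = Matrix.scalar n X - (A*B).map C from rfl]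
    rw [Matrix.map_mul (f := C)]
    congr 1
    ext i j
    simp [XI, Matrix.smul_apply, Matrix.one_apply, Matrix.diagonal_apply]

  have hZ : fromBlocks (1 : Matrix n n R) 0 N' 1 * fromBlocks XI M' 0 (XI - N' * M')
      = fromBlocks (XI - M' * N') M' 0 XI * fromBlocks 1 0 N' 1 := by
    rw [fromBlocks_multiply, fromBlocks_multiply]
    have h11 : (1:Matrix n n R) * XI + 0 * 0 = (XI - M' * N') * 1 + M' * N' := by
      simp
    have h12 : (1:Matrix n n R) * M' + 0 * (XI - N' * M') = (XI - M' * N') * 0 + M' * 1 := by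
      simp
    have h21 : N' * XI + 1 * 0 = 0 * 1 + XI * N' := by
      simp [XI, Matrix.mul_smul, Matrix.smul_mul]
    have h22 : N' * M' + 1 * (XI - N' * M') = 0 * 0 + XI * 1 := by
      simp
    rw [h11, h12, h21, h22]
  have hdet := congrArg Matrix.det hZ
  simp only [Matrix.det_mul, Matrix.det_fromBlocks_zero₂₁, Matrix.det_fromBlocks_zero₁₂,
    Matrix.det_one, one_mul, mul_one] at hdet
  have hX : (XI).det ≠ 0 := by
    rw [show XI = Matrix.diagonal (fun _ : n => (X:R)) from Matrix.smul_one_eq_diagonal X,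
      Matrix.det_diagonal]
    simp only [Finset.prod_const]
    exact pow_ne_zero _ Polynomial.X_ne_zero
  have heq : (XI - N' * M').det = (XI - M' * N').det :=
    mul_left_cancel₀ hX (by rw [hdet]; ring)
  rw [Matrix.charpoly, Matrix.charpoly, key, key, heq]

theorem charpoly_conj (V : Matrix n n ℝ) (hV : Vᵀ * V = 1) (D : Matrix n n ℝ) :
    (V * D * Vᵀ).charpoly = D.charpoly := by
  rw [show V * D * Vᵀ = (V * D) * Vᵀ from rfl, my_charpoly_mul_comm,
    ← Matrix.mul_assoc, hV, Matrix.one_mul]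

theorem charpoly_diag (d : n → ℝ) :
    (Matrix.diagonal d).charpoly
      = (Multiset.map (fun a => X - C a) ((Finset.univ.val).map d)).prod := by
  rw [Matrix.charpoly]
  have : charmatrix (Matrix.diagonal d) = Matrix.diagonal (fun i => (X : Polynomial ℝ) - C (d i)) := by
    ext i j
    by_cases h : i = j <;> simp [charmatrix_apply, Matrix.diagonal_apply, h]
  rw [this, Matrix.det_diagonal]
  rw [Multiset.map_map]
  rfl

theorem matfun_trace_eq {f : ℝ → ℝ} {B fB : Matrix n n ℝ} (h : IsMatFun f B fB) :
    ∃ s : Multiset ℝ, B.charpoly = (Multiset.map (fun a => X - C a) s).prod ∧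
      fB.trace = (Multiset.map f s).sum := by
  obtain ⟨V, d, hV1, hV2, hB, hfB⟩ := h
  refine ⟨(Finset.univ.val).map d, ?_, ?_⟩
  · rw [hB, charpoly_conj V hV2, charpoly_diag]
  · rw [hfB, Matrix.trace_mul_comm, ← Matrix.mul_assoc, hV2, Matrix.one_mul,
      Matrix.trace_diagonal]
    rw [Multiset.map_map]
    rfl

theorem trace_matfun_congr {f : ℝ → ℝ} {B₁ fB₁ B₂ fB₂ : Matrix n n ℝ}
    (h₁ : IsMatFun f B₁ fB₁) (h₂ : IsMatFun f B₂ fB₂)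
    (hcp : B₁.charpoly = B₂.charpoly) : fB₁.trace = fB₂.trace := by
  obtain ⟨s, hs, hts⟩ := matfun_trace_eq h₁
  obtain ⟨t, ht, htt⟩ := matfun_trace_eq h₂
  have : s = t := by
    have := hs ▸ ht ▸ hcp
    have h2 := congrArg Polynomial.roots this
    rwa [Polynomial.roots_multiset_prod_X_sub_C, Polynomial.roots_multiset_prod_X_sub_C] at h2
  rw [hts, htt, this]

theorem conjT_eq_transpose (M : Matrix n n ℝ) : Mᴴ = Mᵀ := by
  ext i j; simp [Matrix.conjTranspose_apply]

theorem psd_quad {M : Matrix n n ℝ} (h : M.PosSemidef) (x : n → ℝ) :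
    0 ≤ x ⬝ᵥ M *ᵥ x := by have := h.dotProduct_mulVec_nonneg x; simpa using this

theorem quad_conj_diag (V : Matrix n n ℝ) (g : n → ℝ) (x : n → ℝ) :
    x ⬝ᵥ (V * Matrix.diagonal g * Vᵀ) *ᵥ x = ∑ i, g i * (Vᵀ *ᵥ x) i ^ 2 := by
  rw [← Matrix.mulVec_mulVec, ← Matrix.mulVec_mulVec, Matrix.dotProduct_mulVec,
    ← Matrix.mulVec_transpose]
  simp only [dotProduct, Matrix.mulVec_diagonal]
  exact Finset.sum_congr rfl fun i _ => by ring

set_option linter.unusedSectionVars false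

theorem conj_diag_symm (V : Matrix n n ℝ) (g : n → ℝ) :
    (V * Matrix.diagonal g * Vᵀ)ᵀ = V * Matrix.diagonal g * Vᵀ := by
  rw [Matrix.transpose_mul, Matrix.transpose_mul, Matrix.transpose_transpose,
    Matrix.diagonal_transpose, Matrix.mul_assoc]

theorem conj_diag_psd (V : Matrix n n ℝ) (g : n → ℝ) (hg : ∀ i, 0 ≤ g i) :
    (V * Matrix.diagonal g * Vᵀ).PosSemidef := by
  refine Matrix.PosSemidef.of_dotProduct_mulVec_nonneg ?_ ?_
  · rw [Matrix.IsHermitian, conjT_eq_transpose, conj_diag_symm]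
  · intro x
    simp only [star_trivial]
    rw [quad_conj_diag]
    exact Finset.sum_nonneg fun i _ => mul_nonneg (hg i) (sq_nonneg _)

theorem psd_diag_entry {M : Matrix n n ℝ} (h : M.PosSemidef) (i : n) : 0 ≤ M i i := by
  have := psd_quad h (Pi.single i 1)
  simpa [dotProduct, Matrix.mulVec, Pi.single_apply, Finset.sum_ite_eq] using this

theorem psd_trace_nonneg {M : Matrix n n ℝ} (h : M.PosSemidef) : 0 ≤ M.trace :=
  Finset.sum_nonneg fun i _ => psd_diag_entry h i

-- multiply two conjugated diagonals
theorem conj_diag_mul (V : Matrix n n ℝ) (hV : Vᵀ * V = 1) (g h : n → ℝ) :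
    (V * Matrix.diagonal g * Vᵀ) * (V * Matrix.diagonal h * Vᵀ)
      = V * Matrix.diagonal (fun i => g i * h i) * Vᵀ := by
  have : Matrix.diagonal g * Matrix.diagonal h = Matrix.diagonal (fun i => g i * h i) :=
    Matrix.diagonal_mul_diagonal g h
  calc (V * Matrix.diagonal g * Vᵀ) * (V * Matrix.diagonal h * Vᵀ)
      = V * Matrix.diagonal g * (Vᵀ * V) * Matrix.diagonal h * Vᵀ := by
        simp only [Matrix.mul_assoc]
    _ = V * Matrix.diagonal (fun i => g i * h i) * Vᵀ := by
        rw [hV, Matrix.mul_one]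
        simp only [Matrix.mul_assoc, ← this]

set_option maxHeartbeats 1000000 in
theorem rc_lemma {f : ℝ → ℝ} (hf : OpMonotoneOn f) (hf0 : f 0 = 0)
    (hfpos : ∀ x : ℝ, 0 ≤ x → 0 ≤ f x) {t a b : ℝ} (ht0 : 0 < t) (ht1 : t < 1)
    (ha : 0 < a) (hb : 0 ≤ b) (htb : t * b < a) : t * f b ≤ f a := by
  obtain ⟨s, hs0, hs2⟩ : ∃ s : ℝ, 0 ≤ s ∧ s ^ 2 = t :=
    ⟨Real.sqrt t, Real.sqrt_nonneg t, Real.sq_sqrt ht0.le⟩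
  obtain ⟨cc, hcc0, hc2⟩ : ∃ cc : ℝ, 0 ≤ cc ∧ cc ^ 2 = 1 - t :=
    ⟨Real.sqrt (1-t), Real.sqrt_nonneg _, Real.sq_sqrt (by linarith)⟩
  set α : ℝ := a - t * b with hα
  have hαpos : 0 < α := by simp only [hα]; linarith
  set β : ℝ := b * s * cc with hβ
  set q : ℝ := b * cc ^ 2 + β ^ 2 / α with hq
  have hqpos : 0 ≤ q := by positivity
  set V : Matrix (Fin 2) (Fin 2) ℝ := !![cc, -s; s, cc] with hV
  have hVt : Vᵀ = !![cc, s; -s, cc] := by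
    ext i j; fin_cases i <;> fin_cases j <;> simp [hV, Matrix.transpose_apply]
  have hVVt : V * Vᵀ = 1 := by
    rw [hVt]; ext i j
    fin_cases i <;> fin_cases j <;>
      simp [hV, Matrix.mul_apply, Fin.sum_univ_two, Matrix.one_apply] <;> nlinarith [hs2, hc2]
  have hVtV : Vᵀ * V = 1 := by
    rw [hVt]; ext i j
    fin_cases i <;> fin_cases j <;>
      simp [hV, Matrix.mul_apply, Fin.sum_univ_two, Matrix.one_apply] <;> nlinarith [hs2, hc2]
  set B : Matrix (Fin 2) (Fin 2) ℝ := Matrix.diagonal ![a, q] with hB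
  set C : Matrix (Fin 2) (Fin 2) ℝ := V * Matrix.diagonal ![0, b] * Vᵀ with hC
  set fB : Matrix (Fin 2) (Fin 2) ℝ := Matrix.diagonal ![f a, f q] with hfB
  set fC : Matrix (Fin 2) (Fin 2) ℝ := V * Matrix.diagonal ![f 0, f b] * Vᵀ with hfC
  have hBpsd : B.PosSemidef := Matrix.posSemidef_diagonal_iff.mpr (by
    intro i; fin_cases i <;> simp [ha.le, hqpos])
  have hCpsd : C.PosSemidef := conj_diag_psd V _ (by intro i; fin_cases i <;> simp [hb])
  have hyeval : ∀ x : Fin 2 → ℝ, (Vᵀ *ᵥ x) 0 = cc * x 0 + s * x 1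
      ∧ (Vᵀ *ᵥ x) 1 = -s * x 0 + cc * x 1 := by
    intro x
    rw [hVt]
    constructor <;> simp [Matrix.mulVec, dotProduct, Fin.sum_univ_two]
  have hBC : (B - C).PosSemidef := by
    refine Matrix.PosSemidef.of_dotProduct_mulVec_nonneg ?_ ?_
    · rw [Matrix.IsHermitian, conjT_eq_transpose, Matrix.transpose_sub, hC, hB,
        Matrix.diagonal_transpose, conj_diag_symm]
    · intro x
      simp only [star_trivial, Matrix.sub_mulVec, dotProduct_sub]
      rw [hC, quad_conj_diag]
      have hBq : x ⬝ᵥ B *ᵥ x = a * x 0 ^ 2 + q * x 1 ^ 2 := by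
        simp [hB, dotProduct, Matrix.mulVec_diagonal, Fin.sum_univ_two]
        ring
      rw [hBq, Fin.sum_univ_two, (hyeval x).1, (hyeval x).2]
      simp only [Matrix.cons_val_zero, Matrix.cons_val_one, Matrix.head_cons]
      have key : α * (a * x 0 ^ 2 + q * x 1 ^ 2 -
          (0 * (cc * x 0 + s * x 1) ^ 2 + b * (-s * x 0 + cc * x 1) ^ 2))
          = (α * x 0 + β * x 1) ^ 2 := by
        have e1 : α = a - s ^ 2 * b := by rw [hα, hs2]
        have hne : a - s ^ 2 * b ≠ 0 := by rw [hs2]; exact ne_of_gt hαpos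
        simp only [hq, hβ, e1]
        field_simp
        ring
      nlinarith [sq_nonneg (α * x 0 + β * x 1), hαpos]
  have hfBmf : IsMatFun f B fB := by
    refine ⟨1, ![a, q], by simp, by simp, by simp [hB], ?_⟩
    simp only [Matrix.transpose_one, Matrix.mul_one, Matrix.one_mul]
    rw [hfB]
    have : (fun i => f ((![a, q]) i)) = ![f a, f q] := by
      ext i; fin_cases i <;> simp
    rw [this]
  have hfCmf : IsMatFun f C fC := by
    refine ⟨V, ![0, b], hVVt, hVtV, rfl, ?_⟩
    rw [hfC]
    have : (fun i => f ((![0, b]) i)) = ![f 0, f b] := by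
      ext i; fin_cases i <;> simp
    rw [this]
  have hfBC : (fB - fC).PosSemidef := hf 2 B C fB fC hBpsd hCpsd hBC hfBmf hfCmf
  have hev := psd_quad hfBC ![1, 0]
  rw [Matrix.sub_mulVec, dotProduct_sub, hfC, quad_conj_diag] at hev
  have h1 : (![(1:ℝ), 0]) ⬝ᵥ fB *ᵥ ![1, 0] = f a := by
    simp [hfB, dotProduct, Matrix.mulVec_diagonal, Fin.sum_univ_two]
  rw [h1, Fin.sum_univ_two, (hyeval ![1, 0]).1, (hyeval ![1, 0]).2] at hev
  simp [hf0] at hev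
  rw [hs2] at hev
  linarith


end CP

set_option maxHeartbeats 2000000 in
theorem main_thm {n : ℕ} (A P : Matrix (Fin n) (Fin n) ℝ)
    (hA : A.PosSemidef) (hPsym : Pᵀ = P) (hPidem : P * P = P)
    (f : ℝ → ℝ) (hf : OpMonotoneOn f) (hf0 : f 0 = 0)
    (hfpos : ∀ x : ℝ, 0 ≤ x → 0 ≤ f x)
    (S : Matrix (Fin n) (Fin n) ℝ) (hS : S.PosSemidef) (hSsq : S * S = A)
    (F₁ F₂ FA : Matrix (Fin n) (Fin n) ℝ)
    (hF₁ : IsMatFun f (S * P * S) F₁)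
    (hF₂ : IsMatFun f (P * A * P) F₂)
    (hFA : IsMatFun f A FA) :
    F₁.trace = F₂.trace ∧ (P * FA * P).trace ≤ F₂.trace := by
  have hAT : Aᵀ = A := by
    have := hA.1; rwa [Matrix.IsHermitian, conjT_eq_transpose] at this
  have hST : Sᵀ = S := by
    have := hS.1; rwa [Matrix.IsHermitian, conjT_eq_transpose] at this
  constructor
  · -- Part 1
    apply trace_matfun_congr hF₁ hF₂
    have h1 : S * P * S = (S * P) * (P * S) := by
      have e : (S * P) * (P * S) = S * (P * P) * S := by simp only [Matrix.mul_assoc]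
      rw [e, hPidem]
    have h2 : P * A * P = (P * S) * (S * P) := by
      have e : (P * S) * (S * P) = P * (S * S) * P := by simp only [Matrix.mul_assoc]
      rw [e, hSsq]
    rw [h1, h2, my_charpoly_mul_comm]
  -- Part 2
  have hFA' := hFA
  obtain ⟨V, d, hV1, hV2, hPAP, hF₂d⟩ := hF₂
  obtain ⟨U, lam, hU1, hU2, hAdec, hFAdec⟩ := hFA'
  have hPAPpsd : (P * A * P).PosSemidef := by
    have h := hA.conjTranspose_mul_mul_same P
    rwa [conjT_eq_transpose, hPsym] at h
  -- eigenvalues nonneg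
  have hDpsd : (Matrix.diagonal d).PosSemidef := by
    have h := hPAPpsd.conjTranspose_mul_mul_same V
    rw [conjT_eq_transpose, hPAP] at h
    have e : Vᵀ * (V * Matrix.diagonal d * Vᵀ) * V = Matrix.diagonal d := by
      calc Vᵀ * (V * Matrix.diagonal d * Vᵀ) * V
          = (Vᵀ * V) * Matrix.diagonal d * (Vᵀ * V) := by simp only [Matrix.mul_assoc]
        _ = Matrix.diagonal d := by rw [hV2]; simp
    rwa [e] at h
  have hd : ∀ i, 0 ≤ d i := by
    intro i
    have := psd_diag_entry hDpsd i
    simpa using this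
  have hLpsd : (Matrix.diagonal lam).PosSemidef := by
    have h := hA.conjTranspose_mul_mul_same U
    rw [conjT_eq_transpose, hAdec] at h
    have e : Uᵀ * (U * Matrix.diagonal lam * Uᵀ) * U = Matrix.diagonal lam := by
      calc Uᵀ * (U * Matrix.diagonal lam * Uᵀ) * U
          = (Uᵀ * U) * Matrix.diagonal lam * (Uᵀ * U) := by simp only [Matrix.mul_assoc]
        _ = Matrix.diagonal lam := by rw [hU2]; simp
    rwa [e] at h
  have hlam : ∀ j, 0 ≤ lam j := by
    intro j
    have := psd_diag_entry hLpsd j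
    simpa using this
  set T : ℝ := A.trace with hTdef
  have hT : T = ∑ j, lam j := by
    rw [hTdef, hAdec, Matrix.trace_mul_comm, ← Matrix.mul_assoc, hU2, Matrix.one_mul,
      Matrix.trace_diagonal]
  have hT0 : 0 ≤ T := hT ▸ Finset.sum_nonneg fun j _ => hlam j
  -- quadratic bound by trace
  have hAbound : ∀ w : Fin n → ℝ, w ⬝ᵥ A *ᵥ w ≤ T * (w ⬝ᵥ w) := by
    intro w
    have hw : w ⬝ᵥ w = ∑ j, ((Uᵀ *ᵥ w) j) ^ 2 := by
      have hone : U * Matrix.diagonal (fun _ : Fin n => (1:ℝ)) * Uᵀ = 1 := by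
        rw [Matrix.diagonal_one, Matrix.mul_one, hU1]
      have h1 := quad_conj_diag U (fun _ : Fin n => (1:ℝ)) w
      rw [hone, Matrix.one_mulVec] at h1
      simpa using h1
    rw [hAdec, quad_conj_diag, hw, Finset.mul_sum]
    apply Finset.sum_le_sum
    intro j _
    have hlj : lam j ≤ T := hT ▸ Finset.single_le_sum (fun i _ => hlam i) (Finset.mem_univ j)
    exact mul_le_mul_of_nonneg_right hlj (sq_nonneg _)
  -- projections
  set χ : Fin n → ℝ := fun i => if d i = 0 then 0 else 1 with hχdef
  set Pp : Matrix (Fin n) (Fin n) ℝ := V * Matrix.diagonal χ * Vᵀ with hPpdef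
  have hPpsym : Ppᵀ = Pp := conj_diag_symm V χ
  have hPVD : P * (V * Matrix.diagonal d) = V * Matrix.diagonal d := by
    have h0 : P * (P * A * P) = P * A * P := by
      rw [← Matrix.mul_assoc, ← Matrix.mul_assoc, hPidem]
    rw [hPAP] at h0
    have := congrArg (· * V) h0
    simp only [Matrix.mul_assoc] at this ⊢
    rw [hV2, Matrix.mul_one] at this
    exact this
  have hPPp : P * Pp = Pp := by
    set dinv : Fin n → ℝ := fun i => if d i = 0 then 0 else (d i)⁻¹ with hdinv
    have hsplit : Matrix.diagonal χ = Matrix.diagonal d * Matrix.diagonal dinv := by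
      rw [Matrix.diagonal_mul_diagonal]
      have e : (fun i => d i * dinv i) = χ := by
        ext i
        by_cases h : d i = 0
        · simp [hχdef, hdinv, h]
        · simp [hχdef, hdinv, h, mul_inv_cancel₀ h]
      rw [e]
    rw [hPpdef, hsplit]
    calc P * (V * (Matrix.diagonal d * Matrix.diagonal dinv) * Vᵀ)
        = P * (V * Matrix.diagonal d) * (Matrix.diagonal dinv * Vᵀ) := by
          simp only [Matrix.mul_assoc]
      _ = V * Matrix.diagonal d * (Matrix.diagonal dinv * Vᵀ) := by rw [hPVD]
      _ = V * (Matrix.diagonal d * Matrix.diagonal dinv) * Vᵀ := by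
          simp only [Matrix.mul_assoc]
  have hPpP : Pp * P = Pp := by
    have := congrArg Matrix.transpose hPPp
    rwa [Matrix.transpose_mul, hPsym, hPpsym] at this
  have hPpPp : Pp * Pp = Pp := by
    rw [hPpdef, conj_diag_mul V hV2]
    have e : (fun i => χ i * χ i) = χ := by
      ext i; by_cases h : d i = 0 <;> simp [hχdef, h]
    rw [e]
  -- P * FA * P = Pp * FA * Pp
  set P₀ : Matrix (Fin n) (Fin n) ℝ := P - Pp with hP₀def
  have hP₀sym : P₀ᵀ = P₀ := by rw [hP₀def, Matrix.transpose_sub, hPsym, hPpsym]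
  have hPP₀ : P * P₀ = P₀ := by rw [hP₀def, Matrix.mul_sub, hPidem, hPPp]
  have hP₀P : P₀ * P = P₀ := by rw [hP₀def, Matrix.sub_mul, hPidem, hPpP]
  have hPAP_P : (P * A * P) * P = P * A * P := by
    have h0 : P * (P * A * P) = P * A * P := by
      rw [← Matrix.mul_assoc, ← Matrix.mul_assoc, hPidem]
    have := congrArg Matrix.transpose h0
    rwa [Matrix.transpose_mul, Matrix.transpose_mul, Matrix.transpose_mul, hPsym, hAT,
      ← Matrix.mul_assoc] at this
  have hPAP_Pp : (P * A * P) * Pp = P * A * P := by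
    rw [hPAP, hPpdef, conj_diag_mul V hV2]
    have e : (fun i => d i * χ i) = d := by
      ext i; by_cases h : d i = 0 <;> simp [hχdef, h]
    rw [e]
  have hPAP_P₀ : (P * A * P) * P₀ = 0 := by
    rw [hP₀def, Matrix.mul_sub, hPAP_P, hPAP_Pp, sub_self]
  have hP₀AP₀ : P₀ * A * P₀ = 0 := by
    calc P₀ * A * P₀ = (P₀ * P) * A * (P * P₀) := by rw [hP₀P, hPP₀]
      _ = P₀ * ((P * A * P) * P₀) := by simp only [Matrix.mul_assoc]
      _ = 0 := by rw [hPAP_P₀, Matrix.mul_zero]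
  have hSP₀ : S * P₀ = 0 := by
    have h : (S * P₀)ᴴ * (S * P₀) = 0 := by
      rw [conjT_eq_transpose, Matrix.transpose_mul, hP₀sym, hST]
      calc P₀ * S * (S * P₀) = P₀ * (S * S) * P₀ := by simp only [Matrix.mul_assoc]
        _ = 0 := by rw [hSsq, hP₀AP₀]
    exact Matrix.conjTranspose_mul_self_eq_zero.mp h
  have hAP₀ : A * P₀ = 0 := by
    rw [← hSsq, Matrix.mul_assoc, hSP₀, Matrix.mul_zero]
  have hFAP₀ : FA * P₀ = 0 := by
    have h1 : Matrix.diagonal lam * (Uᵀ * P₀) = 0 := by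
      have h0 := hAP₀
      rw [hAdec] at h0
      have := congrArg (Uᵀ * ·) h0
      simp only [Matrix.mul_zero] at this
      calc Matrix.diagonal lam * (Uᵀ * P₀)
          = (Uᵀ * U) * Matrix.diagonal lam * (Uᵀ * P₀) := by rw [hU2, Matrix.one_mul]
        _ = Uᵀ * (U * Matrix.diagonal lam * Uᵀ * P₀) := by simp only [Matrix.mul_assoc]
        _ = 0 := by simpa only [Matrix.mul_assoc] using this
    have h2 : Matrix.diagonal (fun j => f (lam j)) * (Uᵀ * P₀) = 0 := by
      ext i j
      have e1 : lam i * (Uᵀ * P₀) i j = 0 := by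
        have := congrFun (congrFun h1 i) j
        simpa [Matrix.diagonal_mul] using this
      have : f (lam i) * (Uᵀ * P₀) i j = 0 := by
        by_cases h : lam i = 0
        · simp [h, hf0]
        · rcases mul_eq_zero.mp e1 with h' | h'
          · exact absurd h' h
          · simp [h']
      simpa [Matrix.diagonal_mul] using this
    rw [hFAdec]
    calc U * Matrix.diagonal (fun j => f (lam j)) * Uᵀ * P₀
        = U * (Matrix.diagonal (fun j => f (lam j)) * (Uᵀ * P₀)) := by
          simp only [Matrix.mul_assoc]
      _ = 0 := by rw [h2, Matrix.mul_zero]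
  have hFAsym : FAᵀ = FA := by rw [hFAdec]; exact conj_diag_symm U _
  have hP₀FA : P₀ * FA = 0 := by
    have := congrArg Matrix.transpose hFAP₀
    rwa [Matrix.transpose_mul, hP₀sym, hFAsym, Matrix.transpose_zero] at this
  have hred : P * FA * P = Pp * FA * Pp := by
    have hP : P = Pp + P₀ := by rw [hP₀def]; abel
    calc P * FA * P = (Pp + P₀) * FA * (Pp + P₀) := by rw [← hP]
      _ = Pp * FA * Pp + Pp * (FA * P₀) + (P₀ * FA) * Pp + P₀ * FA * P₀ := by
          simp only [Matrix.add_mul, Matrix.mul_add, Matrix.mul_assoc]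
          abel
      _ = Pp * FA * Pp := by
          rw [hFAP₀, hP₀FA, Matrix.mul_zero, Matrix.zero_mul]
          simp [Matrix.mul_assoc]
  have htrF₂ : F₂.trace = ∑ i, f (d i) := by
    rw [hF₂d, Matrix.trace_mul_comm, ← Matrix.mul_assoc, hV2, Matrix.one_mul,
      Matrix.trace_diagonal]
  have hF₂0 : 0 ≤ F₂.trace := htrF₂ ▸ Finset.sum_nonneg fun i _ => hfpos _ (hd i)
  -- the ε-family inequality
  have hmain : ∀ tt : ℝ, 0 < tt → tt < 1 → tt * (P * FA * P).trace ≤ F₂.trace := by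
    intro tt htt0 htt1
    by_cases hall : ∀ i, d i = 0
    · -- Pp = 0
      have hχ0 : χ = fun _ => (0:ℝ) := by ext i; simp [hχdef, hall i]
      have hPp0 : Pp = 0 := by
        rw [hPpdef, hχ0]
        simp [Matrix.diagonal_zero]
      rw [hred, hPp0]
      simp only [Matrix.zero_mul, Matrix.mul_zero, Matrix.trace_zero, mul_zero]
      exact hF₂0
    · push_neg at hall
      obtain ⟨i₀, hi₀⟩ := hall
      -- minimum positive eigenvalue
      set Dpos : Finset (Fin n) := Finset.univ.filter (fun i => d i ≠ 0) with hDpos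
      have hne : Dpos.Nonempty := ⟨i₀, by simp [hDpos, hi₀]⟩
      set m₀ : ℝ := Dpos.inf' hne d with hm₀
      have hm₀pos : 0 < m₀ := by
        rw [hm₀, Finset.lt_inf'_iff]
        intro i hi
        simp only [hDpos, Finset.mem_filter] at hi
        exact lt_of_le_of_ne (hd i) (Ne.symm hi.2)
      have hm₀le : ∀ i, d i ≠ 0 → m₀ ≤ d i := by
        intro i hi
        exact Finset.inf'_le d (by simp [hDpos, hi])
      set ε : ℝ := (1 - tt) * m₀ / (2 * tt) with hε
      have hεpos : 0 < ε := by
        apply div_pos (mul_pos (by linarith) hm₀pos) (by linarith)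
      have hkey : ∀ i, d i ≠ 0 → tt * (d i + ε) < d i := by
        intro i hi
        have h1 : m₀ ≤ d i := hm₀le i hi
        have h2 : tt * ε = (1 - tt) * m₀ / 2 := by
          rw [hε]; field_simp
        nlinarith [hm₀pos]
      set c : ℝ := (T+1)^2 / ε + (T+1) with hc
      have hc0 : 0 ≤ c := by positivity
      set d' : Fin n → ℝ := fun i => if d i = 0 then c else d i + ε with hd'
      have hd'0 : ∀ i, 0 ≤ d' i := by
        intro i
        by_cases h : d i = 0 <;> simp [hd', h, hc0]
        · have := hd i; linarith
      set Bε : Matrix (Fin n) (Fin n) ℝ := V * Matrix.diagonal d' * Vᵀ with hBε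
      set G : Matrix (Fin n) (Fin n) ℝ := V * Matrix.diagonal (fun i => f (d' i)) * Vᵀ with hG
      have hBεpsd : Bε.PosSemidef := conj_diag_psd V d' hd'0
      -- the PSD comparison Bε ⪰ A
      have hBεA : (Bε - A).PosSemidef := by
        refine Matrix.PosSemidef.of_dotProduct_mulVec_nonneg ?_ ?_
        · rw [Matrix.IsHermitian, conjT_eq_transpose, Matrix.transpose_sub, hAT, hBε,
            conj_diag_symm]
        · intro x
          simp only [star_trivial, Matrix.sub_mulVec, dotProduct_sub, sub_nonneg]
          set y : Fin n → ℝ := Vᵀ *ᵥ x with hy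
          set yp : Fin n → ℝ := fun i => if d i = 0 then 0 else y i with hyp
          set y₀ : Fin n → ℝ := fun i => if d i = 0 then y i else 0 with hy₀
          have hysplit : y = yp + y₀ := by
            ext i; by_cases h : d i = 0 <;> simp [hyp, hy₀, h]
          set u : Fin n → ℝ := V *ᵥ yp with hu
          set z : Fin n → ℝ := V *ᵥ y₀ with hz
          have hxVy : V *ᵥ y = x := by
            rw [hy, Matrix.mulVec_mulVec, hV1, Matrix.one_mulVec]
          have hx : x = u + z := by
            rw [← hxVy, hysplit, Matrix.mulVec_add]
          have hVtu : Vᵀ *ᵥ u = yp := by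
            rw [hu, Matrix.mulVec_mulVec, hV2, Matrix.one_mulVec]
          have hVtz : Vᵀ *ᵥ z = y₀ := by
            rw [hz, Matrix.mulVec_mulVec, hV2, Matrix.one_mulVec]
          have huu : u ⬝ᵥ u = ∑ i, (yp i)^2 := by
            have h1 : u ⬝ᵥ u = (u ᵥ* V) ⬝ᵥ yp := by
              rw [hu, Matrix.dotProduct_mulVec]
            rw [h1, ← Matrix.mulVec_transpose, hVtu]
            simp [dotProduct, sq]
          have hzz : z ⬝ᵥ z = ∑ i, (y₀ i)^2 := by
            have h1 : z ⬝ᵥ z = (z ᵥ* V) ⬝ᵥ y₀ := by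
              rw [hz, Matrix.dotProduct_mulVec]
            rw [h1, ← Matrix.mulVec_transpose, hVtz]
            simp [dotProduct, sq]
          have hPu : P *ᵥ u = u := by
            have hypχ : Matrix.diagonal χ *ᵥ y = yp := by
              ext i
              by_cases h : d i = 0 <;> simp [Matrix.mulVec_diagonal, hχdef, hyp, h]
            have hu2 : u = Pp *ᵥ x := by
              rw [hPpdef, ← Matrix.mulVec_mulVec, ← Matrix.mulVec_mulVec, ← hy, hypχ, hu]
            rw [hu2, Matrix.mulVec_mulVec, hPPp]
          have huAu : u ⬝ᵥ A *ᵥ u = ∑ i, d i * (y i)^2 := by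
            have h1 : u ⬝ᵥ (P * A * P) *ᵥ u = u ⬝ᵥ A *ᵥ u := by
              have e1 : (P * A * P) *ᵥ u = P *ᵥ (A *ᵥ u) := by
                rw [← Matrix.mulVec_mulVec, ← Matrix.mulVec_mulVec, hPu]
              rw [e1, Matrix.dotProduct_mulVec, ← Matrix.mulVec_transpose, hPsym, hPu]
            rw [← h1, hPAP, quad_conj_diag, hVtu]
            apply Finset.sum_congr rfl
            intro i _
            by_cases h : d i = 0 <;> simp [hyp, h]
          have hsym : z ⬝ᵥ A *ᵥ u = u ⬝ᵥ A *ᵥ z := by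
            rw [Matrix.dotProduct_mulVec, ← Matrix.mulVec_transpose, hAT,
              dotProduct_comm]
          set τ : ℝ := ε / (T + 1) with hτ
          have hτpos : 0 < τ := div_pos hεpos (by linarith)
          have hτT : τ * (T + 1) = ε := by rw [hτ]; field_simp
          have hcτ : c * τ = (T+1) + τ * (T+1) := by
            rw [hc, hτ]; field_simp
          have hτTle : τ * T ≤ ε := by nlinarith
          have hTau : 0 ≤ τ^2 * (u ⬝ᵥ A *ᵥ u) - 2 * τ * (u ⬝ᵥ A *ᵥ z) + z ⬝ᵥ A *ᵥ z := by
            have h0 := psd_quad hA (τ • u - z)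
            have hexp : (τ • u - z) ⬝ᵥ A *ᵥ (τ • u - z)
                = τ^2 * (u ⬝ᵥ A *ᵥ u) - 2 * τ * (u ⬝ᵥ A *ᵥ z) + z ⬝ᵥ A *ᵥ z := by
              simp only [Matrix.mulVec_sub, Matrix.mulVec_smul, dotProduct_sub,
                sub_dotProduct, smul_dotProduct, dotProduct_smul,
                smul_eq_mul, hsym]
              ring
            rw [hexp] at h0
            exact h0
          have ha1T : u ⬝ᵥ A *ᵥ u ≤ T * (u ⬝ᵥ u) := hAbound u
          have hb1T : z ⬝ᵥ A *ᵥ z ≤ T * (z ⬝ᵥ z) := hAbound z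
          have hb1p : 0 ≤ z ⬝ᵥ A *ᵥ z := psd_quad hA z
          have huup : 0 ≤ u ⬝ᵥ u := Finset.sum_nonneg fun i _ => mul_self_nonneg _
          have hzzp : 0 ≤ z ⬝ᵥ z := Finset.sum_nonneg fun i _ => mul_self_nonneg _
          -- main scalar inequality
          have hfinal : (u ⬝ᵥ A *ᵥ u) + 2 * (u ⬝ᵥ A *ᵥ z) + (z ⬝ᵥ A *ᵥ z)
              ≤ (u ⬝ᵥ A *ᵥ u) + ε * (u ⬝ᵥ u) + c * (z ⬝ᵥ z) := by
            have hmul : 2 * (u ⬝ᵥ A *ᵥ z) + (z ⬝ᵥ A *ᵥ z) ≤ ε * (u ⬝ᵥ u) + c * (z ⬝ᵥ z) := by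
              rw [← mul_le_mul_iff_right₀ hτpos]
              have F1 : τ^2 * (u ⬝ᵥ A *ᵥ u) ≤ τ^2 * (T * (u ⬝ᵥ u)) :=
                mul_le_mul_of_nonneg_left ha1T (sq_nonneg τ)
              have F2 : (τ * T) * (τ * (u ⬝ᵥ u)) ≤ ε * (τ * (u ⬝ᵥ u)) :=
                mul_le_mul_of_nonneg_right hτTle (mul_nonneg hτpos.le huup)
              have F4 : τ * (z ⬝ᵥ A *ᵥ z) ≤ τ * (T * (z ⬝ᵥ z)) :=
                mul_le_mul_of_nonneg_left hb1T hτpos.le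
              have F5 : c * τ * (z ⬝ᵥ z) = ((T+1) + τ * (T+1)) * (z ⬝ᵥ z) := by rw [hcτ]
              have F6 : 0 ≤ τ * (z ⬝ᵥ z) := mul_nonneg hτpos.le hzzp
              nlinarith [hTau, F1, F2, F4, F5, F6, hzzp, hb1T]
            linarith
          -- x A x expansion
          have hxAx : x ⬝ᵥ A *ᵥ x
              = (u ⬝ᵥ A *ᵥ u) + 2 * (u ⬝ᵥ A *ᵥ z) + (z ⬝ᵥ A *ᵥ z) := by
            rw [hx]
            simp only [Matrix.mulVec_add, dotProduct_add, add_dotProduct, hsym]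
            ring
          -- Bε quadratic form
          have hBq : x ⬝ᵥ Bε *ᵥ x = ∑ i, d' i * (y i)^2 := by
            rw [hBε, quad_conj_diag, ← hy]
          have hsum : ∑ i, d' i * (y i)^2
              = (∑ i, d i * (y i)^2) + ε * (∑ i, (yp i)^2) + c * (∑ i, (y₀ i)^2) := by
            rw [Finset.mul_sum, Finset.mul_sum, ← Finset.sum_add_distrib,
              ← Finset.sum_add_distrib]
            apply Finset.sum_congr rfl
            intro i _
            by_cases h : d i = 0 <;> simp [hd', hyp, hy₀, h] <;> ring
          rw [hxAx, hBq, hsum, ← huAu, ← huu, ← hzz]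
          exact hfinal
      -- apply operator monotonicity
      have hGFA : (G - FA).PosSemidef :=
        hf n Bε A G FA hBεpsd hA hBεA ⟨V, d', hV1, hV2, rfl, rfl⟩ hFA
      -- trace inequality
      have hpsd2 : (Pp * (G - FA) * Pp).PosSemidef := by
        have h := hGFA.conjTranspose_mul_mul_same Pp
        rwa [conjT_eq_transpose, hPpsym] at h
      have htr2 : 0 ≤ (Pp * (G - FA) * Pp).trace := psd_trace_nonneg hpsd2
      have htr3 : (Pp * FA * Pp).trace ≤ (Pp * G * Pp).trace := by
        have e : Pp * (G - FA) * Pp = Pp * G * Pp - Pp * FA * Pp := by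
          rw [Matrix.mul_sub, Matrix.sub_mul]
        rw [e, Matrix.trace_sub] at htr2
        linarith
      have htrG : (Pp * G * Pp).trace = ∑ i, χ i * f (d' i) * χ i := by
        rw [hPpdef, hG, conj_diag_mul V hV2, conj_diag_mul V hV2,
          Matrix.trace_mul_comm, ← Matrix.mul_assoc, hV2, Matrix.one_mul,
          Matrix.trace_diagonal]
      have hsum2 : ∑ i, χ i * f (d' i) * χ i ≤ (∑ i, f (d i)) / tt := by
        rw [Finset.sum_div]
        apply Finset.sum_le_sum
        intro i _
        by_cases h : d i = 0
        · simp [hχdef, h, hf0]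
        · have hdi : 0 < d i := lt_of_le_of_ne (hd i) (Ne.symm h)
          have hrc : tt * f (d i + ε) ≤ f (d i) :=
            rc_lemma hf hf0 hfpos htt0 htt1 hdi (by linarith [hεpos, hd i]) (hkey i h)
          have : f (d i + ε) ≤ f (d i) / tt := by
            rw [le_div_iff₀ htt0]; linarith
          simpa [hχdef, hd', h] using this
      -- conclude
      have hchain : (P * FA * P).trace ≤ F₂.trace / tt := by
        rw [hred, htrF₂]
        calc (Pp * FA * Pp).trace ≤ (Pp * G * Pp).trace := htr3
          _ = ∑ i, χ i * f (d' i) * χ i := htrG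
          _ ≤ (∑ i, f (d i)) / tt := hsum2
      calc tt * (P * FA * P).trace ≤ tt * (F₂.trace / tt) :=
            mul_le_mul_of_nonneg_left hchain htt0.le
        _ = F₂.trace := by field_simp
  -- from hmain conclude
  set x : ℝ := (P * FA * P).trace with hxdef
  rcases le_or_gt x 0 with hx | hx
  · linarith
  · by_contra hcon
    push_neg at hcon
    have hdiv : F₂.trace / x < 1 := (div_lt_one hx).mpr hcon
    have hdiv0 : 0 ≤ F₂.trace / x := div_nonneg hF₂0 hx.le
    have h := hmain ((F₂.trace / x + 1) / 2) (by linarith) (by linarith)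
    have hxx : F₂.trace / x * x = F₂.trace := div_mul_cancel₀ _ (ne_of_gt hx)
    nlinarith [h, hxx, hx, hcon]


/-- for PSD `A`, an orthogonal projection `P`, and `f` operator monotone
on `[0,∞)` with `f(0) = 0`, `f ≥ 0`: `tr f(A^{1/2} P A^{1/2}) = tr f(P A P)` and
`tr f(P A P) ≥ tr (P f(A) P)`.  Here `S` is the PSD square root of `A`. -/
theorem trace_matrix_function_projection {n : ℕ} (A P : Matrix (Fin n) (Fin n) ℝ)
    (hA : A.PosSemidef) (hPsym : Pᵀ = P) (hPidem : P * P = P)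
    (f : ℝ → ℝ) (hf : OpMonotoneOn f) (hf0 : f 0 = 0)
    (hfpos : ∀ x : ℝ, 0 ≤ x → 0 ≤ f x)
    (S : Matrix (Fin n) (Fin n) ℝ) (hS : S.PosSemidef) (hSsq : S * S = A)
    (F₁ F₂ FA : Matrix (Fin n) (Fin n) ℝ)
    (hF₁ : IsMatFun f (S * P * S) F₁)
    (hF₂ : IsMatFun f (P * A * P) F₂)
    (hFA : IsMatFun f A FA) :
    F₁.trace = F₂.trace ∧ (P * FA * P).trace ≤ F₂.trace :=
  main_thm A P hA hPsym hPidem f hf hf0 hfpos S hS hSsq F₁ F₂ FA hF₁ hF₂ hFA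

end FunNystrom
end

section
/- In the Setting below, assume q ≥ 1 and that Ω₁ = U₁ᵀΩ has rank k. Then for the matrix square root, ‖A^{1/2} − (Â_q)^{1/2}‖_F² ≤ Σ_{i=k+1}^{n} λ_i + γ^{2(q−1)} ‖Λ₂^{1/2} Ω₂ Ω₁†‖_F², where (Â_q)^{1/2} denotes the PSD square root of the Nyström approximation Â_q. -/
set_option maxHeartbeats 1000000


open Matrix MeasureTheory ProbabilityTheory
open scoped ENNReal

namespace FunNystrom

section Aux
set_option linter.unusedSectionVars false
variable {N : Type*} [Fintype N] [DecidableEq N]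

lemma transpose_eq_of_herm {M : Matrix N N ℝ} (h : M.IsHermitian) : Mᵀ = M := by
  rw [← conjTranspose_eq_transpose_of_trivial]; exact h

lemma psd_of_symm_idem (M : Matrix N N ℝ) (h1 : Mᵀ = M) (h2 : M * M = M) : M.PosSemidef := by
  have : M = Mᴴ * M := by
    rw [conjTranspose_eq_transpose_of_trivial, h1, h2]
  rw [this]; exact posSemidef_conjTranspose_mul_self M

lemma psd_diag_nonneg {M : Matrix N N ℝ} (h : M.PosSemidef) (i : N) : 0 ≤ M i i := by
  exact h.diag_nonneg

lemma trace_psd_nonneg {M : Matrix N N ℝ} (h : M.PosSemidef) : 0 ≤ M.trace :=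
  Finset.sum_nonneg fun i _ => psd_diag_nonneg h i

open scoped MatrixOrder in
lemma trace_mul_psd_nonneg {B C : Matrix N N ℝ} (hB : B.PosSemidef) (hC : C.PosSemidef) :
    0 ≤ (B * C).trace := by
  have h1 : B = CFC.sqrt B * CFC.sqrt B := (CFC.sqrt_mul_sqrt_self B hB.nonneg).symm
  have h2 : B * C = CFC.sqrt B * (CFC.sqrt B * C) := by rw [← mul_assoc, ← h1]
  rw [h2, trace_mul_comm, mul_assoc]
  have h3 := hC.mul_mul_conjTranspose_same (CFC.sqrt B)
  rw [Matrix.IsHermitian.eq (CFC.sqrt_nonneg B).posSemidef.isHermitian, mul_assoc] at h3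
  exact trace_psd_nonneg h3

lemma sub_psd_of_sq_sub_sq {X Y : Matrix N N ℝ} (hX : X.PosSemidef) (hY : Y.PosSemidef)
    (h : (X * X - Y * Y).PosSemidef) : (X - Y).PosSemidef := by
  have hH : (X - Y).IsHermitian := hX.isHermitian.sub hY.isHermitian
  apply hH.posSemidef_iff_eigenvalues_nonneg.mpr
  intro i
  by_contra hneg
  push_neg at hneg
  rw [Pi.zero_apply] at hneg
  set μ : ℝ := hH.eigenvalues i with hμ
  set v : N → ℝ := ⇑(hH.eigenvectorBasis i) with hv
  have hvec : (X - Y) *ᵥ v = μ • v := hH.mulVec_eigenvectorBasis i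
  have hvne : v ≠ 0 := by
    intro h0
    have := hH.eigenvectorBasis.orthonormal.1 i
    rw [show (hH.eigenvectorBasis i : EuclideanSpace ℝ N) = 0 from by
      ext j; exact congrFun h0 j] at this
    simp at this
  have hd : 0 ≤ v ⬝ᵥ ((X * X - Y * Y) *ᵥ v) := by simpa using h.dotProduct_mulVec_nonneg v
  have hiden : X * X - Y * Y = X * (X - Y) + (X - Y) * Y := by noncomm_ring
  have ha : (0:ℝ) ≤ v ⬝ᵥ (X *ᵥ v) := by simpa using hX.dotProduct_mulVec_nonneg v
  have hb : (0:ℝ) ≤ v ⬝ᵥ (Y *ᵥ v) := by simpa using hY.dotProduct_mulVec_nonneg v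
  have hd2 : v ⬝ᵥ ((X * X - Y * Y) *ᵥ v) = μ * (v ⬝ᵥ (X *ᵥ v)) + μ * (v ⬝ᵥ (Y *ᵥ v)) := by
    rw [hiden, add_mulVec, dotProduct_add]
    congr 1
    · rw [← mulVec_mulVec, hvec, mulVec_smul, dotProduct_smul, smul_eq_mul,
        dotProduct_comm]
    · rw [← mulVec_mulVec, dotProduct_mulVec, ← mulVec_transpose,
        transpose_eq_of_herm hH, hvec, smul_dotProduct, smul_eq_mul]
  have hab : v ⬝ᵥ (X *ᵥ v) = 0 ∧ v ⬝ᵥ (Y *ᵥ v) = 0 := by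
    constructor <;> nlinarith [hd, hd2, ha, hb, hneg]
  have hXv : X *ᵥ v = 0 := by
    have := (hX.dotProduct_mulVec_zero_iff v).mp (by simpa using hab.1)
    simpa using this
  have hYv : Y *ᵥ v = 0 := by
    have := (hY.dotProduct_mulVec_zero_iff v).mp (by simpa using hab.2)
    simpa using this
  have : μ • v = 0 := by rw [← hvec, sub_mulVec, hXv, hYv, sub_zero]
  rcases smul_eq_zero.mp this with h0 | h0
  · exact absurd h0 (ne_of_lt hneg)
  · exact hvne h0

lemma powers_stormer {X Y : Matrix N N ℝ} (hX : X.PosSemidef) (hY : Y.PosSemidef)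
    (h : (X * X - Y * Y).PosSemidef) :
    ((X - Y) * (X - Y)).trace ≤ (X * X).trace - (Y * Y).trace := by
  have hXY := sub_psd_of_sq_sub_sq hX hY h
  have h2 : 0 ≤ (Y * (X - Y)).trace := trace_mul_psd_nonneg hY hXY
  have e1 : (X - Y) * (X - Y) = X * X - X * Y - Y * X + Y * Y := by noncomm_ring
  have e2 : Y * (X - Y) = Y * X - Y * Y := by noncomm_ring
  have e3 : (X * Y).trace = (Y * X).trace := trace_mul_comm X Y
  rw [e2, trace_sub] at h2
  rw [e1, trace_add, trace_sub, trace_sub, e3]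
  linarith

lemma trace_conj {n : ℕ} (U : Matrix (Fin n) (Fin n) ℝ) (hU' : Uᵀ * U = 1)
    (M : Matrix (Fin n) (Fin n) ℝ) : (U * M * Uᵀ).trace = M.trace := by
  rw [trace_mul_comm, ← mul_assoc, hU', one_mul]

lemma sum_split {n k : ℕ} (hkn : k < n) (f : Fin n → ℝ) :
    ∑ i, f i = (∑ j : Fin k, f ⟨j.1, lt_of_lt_of_le j.2 hkn.le⟩)
      + ∑ j : Fin (n - k), f (tailIdx hkn j) := by
  have h : k + (n - k) = n := by omega
  rw [← Equiv.sum_comp (finSumFinEquiv.trans (finCongr h)) f, Fintype.sum_sum_type]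
  congr 1

lemma sandwich_transpose {a b : Type*} [Fintype a] [Fintype b]
    (Z : Matrix a b ℝ) (S : Matrix b b ℝ) (hS : Sᵀ = S) : (Z * S * Zᵀ)ᵀ = Z * S * Zᵀ := by
  rw [transpose_mul, transpose_mul, transpose_transpose, hS, Matrix.mul_assoc]

end Aux

/-- structural Frobenius-norm bound for the matrix square root
(`q ≥ 1`); `Shat` is the PSD square root of the Nyström approximation. -/
theorem funNystrom_sqrt_frobenius_structural {n k p : ℕ} (q : ℕ) (hq : 1 ≤ q)
    (hk1 : 1 ≤ k) (hkn : k < n)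
    (U : Matrix (Fin n) (Fin n) ℝ) (hU : U * Uᵀ = 1) (hU' : Uᵀ * U = 1)
    (lam : Fin n → ℝ) (hlam : Antitone lam) (hlam0 : ∀ i, 0 ≤ lam i)
    (hlamk : 0 < lam ⟨k - 1, by omega⟩)
    (A : Matrix (Fin n) (Fin n) ℝ) (hA : A = U * Matrix.diagonal lam * Uᵀ)
    (Ω : Matrix (Fin n) (Fin (k + p)) ℝ)
    (P : Matrix (Fin n) (Fin n) ℝ)
    (hP : IsProjOnto P (apow U lam ((q : ℝ) - 1/2) * Ω))
    (Ahat : Matrix (Fin n) (Fin n) ℝ)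
    (hAhat : Ahat = apow U lam (1/2) * P * apow U lam (1/2))
    (Ω₁ : Matrix (Fin k) (Fin (k + p)) ℝ)
    (hΩ₁ : Ω₁ = (Matrix.of fun (i : Fin n) (j : Fin k) => U i ⟨j.1, by have := j.2; omega⟩)ᵀ * Ω)
    (Ω₂ : Matrix (Fin (n - k)) (Fin (k + p)) ℝ)
    (hΩ₂ : Ω₂ = (Matrix.of fun (i : Fin n) (j : Fin (n - k)) => U i (tailIdx hkn j))ᵀ * Ω)
    (hrank : Ω₁.rank = k)
    (Shat : Matrix (Fin n) (Fin n) ℝ) (hShat : Shat.PosSemidef)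
    (hShatsq : Shat * Shat = Ahat) :
    frob (apow U lam (1/2) - Shat) ^ 2 ≤
      (∑ i : Fin (n - k), lam (tailIdx hkn i)) +
      (lam ⟨k, hkn⟩ / lam ⟨k - 1, by omega⟩) ^ (2 * (q - 1)) *
        frob ((Matrix.diagonal (fun i : Fin (n - k) => Real.sqrt (lam (tailIdx hkn i)))) * Ω₂ * (Ω₁ᵀ * (Ω₁ * Ω₁ᵀ)⁻¹)) ^ 2 := by
  classical
  have hkle : k ≤ n := hkn.le
  set hd : Fin k → Fin n := fun j => ⟨j.1, lt_of_lt_of_le j.2 hkle⟩ with hhd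
  set tl : Fin (n - k) → Fin n := tailIdx hkn with htl
  set ε : ℝ := (q : ℝ) - 1/2 with hε
  -- basic eigenvalue facts
  have hlam_hd_ge : ∀ j : Fin k, lam ⟨k - 1, by omega⟩ ≤ lam (hd j) := by
    intro j
    apply hlam
    simp only [Fin.le_def, hhd]
    have := j.2; omega
  have hlam_hd_pos : ∀ j : Fin k, 0 < lam (hd j) := fun j => lt_of_lt_of_le hlamk (hlam_hd_ge j)
  have hlam_tl_le : ∀ i : Fin (n - k), lam (tl i) ≤ lam ⟨k, hkn⟩ := by
    intro i
    apply hlam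
    simp only [Fin.le_def, htl, tailIdx]
    omega
  -- invertibility of Ω₁ * Ω₁ᵀ
  have hBrank : (Ω₁ * Ω₁ᵀ).rank = k := by rw [Matrix.rank_self_mul_transpose, hrank]
  have hBunit : IsUnit (Ω₁ * Ω₁ᵀ) := by
    rw [← Matrix.mulVec_surjective_iff_isUnit]
    have hr : LinearMap.range (Ω₁ * Ω₁ᵀ).mulVecLin = ⊤ := by
      apply Submodule.eq_top_of_finrank_eq
      rw [← Matrix.rank, hBrank]
      simp [Module.finrank_pi]
    have := LinearMap.range_eq_top.mp hr
    rwa [Matrix.coe_mulVecLin] at this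
  have hBdet : IsUnit (Ω₁ * Ω₁ᵀ).det := (Matrix.isUnit_iff_isUnit_det _).mp hBunit
  set Pd := Ω₁ᵀ * (Ω₁ * Ω₁ᵀ)⁻¹ with hPd
  have hΩ₁Pd : Ω₁ * Pd = 1 := by
    rw [hPd, ← Matrix.mul_assoc, Matrix.mul_nonsing_inv _ hBdet]
  set G := Ω₂ * Pd with hG
  set D1inv : Matrix (Fin k) (Fin k) ℝ := diagonal (fun j => lam (hd j) ^ (-ε)) with hD1inv
  set W := Pd * D1inv with hW
  set Yq := apow U lam ε * Ω with hYq
  set Z := Yq * W with hZ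
  obtain ⟨hP1, hP2, hP3⟩ := hP
  -- P fixes the columns of Yq
  have hPY : P * Yq = Yq := by
    have hfix : ∀ x, P *ᵥ (Yq *ᵥ x) = Yq *ᵥ x := by
      intro x
      have hx : Yq *ᵥ x ∈ LinearMap.range P.mulVecLin := by
        rw [hP3]; exact ⟨x, rfl⟩
      obtain ⟨u, hu⟩ := hx
      rw [← hu]
      show P *ᵥ (P *ᵥ u) = P *ᵥ u
      rw [Matrix.mulVec_mulVec, hP2]
    ext i j
    have := congrFun (hfix (Pi.single j 1)) i
    simpa [Matrix.mulVec_single, Matrix.mul_apply, Matrix.mulVec, dotProduct,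
      Pi.single_apply, mul_ite, Finset.sum_ite_eq] using this
  have hPZ : P * Z = Z := by rw [hZ, ← Matrix.mul_assoc, hPY]
  set Q := Uᵀ * P * U with hQ
  have hQsym : Qᵀ = Q := by
    rw [hQ, transpose_mul, transpose_mul, transpose_transpose, hP1, Matrix.mul_assoc]
  have hQidem : Q * Q = Q := by
    have : Q * Q = Uᵀ * (P * (U * Uᵀ) * P) * U := by rw [hQ]; noncomm_ring
    rw [this, hU, mul_one, hP2, hQ]
  set Zb := Uᵀ * Z with hZb
  have hQZb : Q * Zb = Zb := by
    calc Q * Zb = Uᵀ * ((P * (U * Uᵀ)) * Z) := by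
          rw [hQ, hZb, Matrix.mul_assoc, Matrix.mul_assoc, Matrix.mul_assoc,
            ← Matrix.mul_assoc U Uᵀ Z, ← Matrix.mul_assoc P (U * Uᵀ) Z]
      _ = Zb := by rw [hU, mul_one, hPZ, hZb]
  -- entries of Uᵀ * Ω
  have hUΩ_hd : ∀ (j : Fin k) (c : Fin (k + p)), (Uᵀ * Ω) (hd j) c = Ω₁ j c := by
    intro j c
    rw [hΩ₁]
    simp [Matrix.mul_apply, hhd]
  have hUΩ_tl : ∀ (i : Fin (n - k)) (c : Fin (k + p)), (Uᵀ * Ω) (tl i) c = Ω₂ i c := by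
    intro i c
    rw [hΩ₂]
    simp [Matrix.mul_apply]
  have hΩ₁W : Ω₁ * W = D1inv := by rw [hW, ← Matrix.mul_assoc, hΩ₁Pd, one_mul]
  have hΩ₂W : Ω₂ * W = G * D1inv := by rw [hG, Matrix.mul_assoc]
  have hZb_eq : Zb = diagonal (fun i => lam i ^ ε) * ((Uᵀ * Ω) * W) := by
    rw [hZb, hZ, hYq, apow]
    calc Uᵀ * (U * diagonal (fun i => lam i ^ ε) * Uᵀ * Ω * W)
        = (Uᵀ * U) * (diagonal (fun i => lam i ^ ε) * ((Uᵀ * Ω) * W)) := by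
          simp only [Matrix.mul_assoc]
      _ = _ := by rw [hU', Matrix.one_mul]
  have hZb_hd : ∀ (j₀ j : Fin k), Zb (hd j₀) j = (1 : Matrix (Fin k) (Fin k) ℝ) j₀ j := by
    intro j₀ j
    have h1 : ((Uᵀ * Ω) * W) (hd j₀) j = (Ω₁ * W) j₀ j := by
      rw [Matrix.mul_apply, Matrix.mul_apply]
      exact Finset.sum_congr rfl fun c _ => by rw [hUΩ_hd]
    rw [hZb_eq, Matrix.diagonal_mul, h1, hΩ₁W]
    by_cases hjj : j₀ = j
    · subst hjj
      rw [hD1inv, Matrix.diagonal_apply_eq, Matrix.one_apply_eq,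
        Real.rpow_neg (hlam_hd_pos j₀).le,
        mul_inv_cancel₀ (Real.rpow_pos_of_pos (hlam_hd_pos j₀) ε).ne']
    · rw [hD1inv, Matrix.diagonal_apply_ne _ hjj, Matrix.one_apply_ne hjj, mul_zero]
  set F : Matrix (Fin (n - k)) (Fin k) ℝ :=
    Matrix.of (fun i j => lam (tl i) ^ ε * (G i j * lam (hd j) ^ (-ε))) with hF
  have hZb_tl : ∀ (i : Fin (n - k)) (j : Fin k), Zb (tl i) j = F i j := by
    intro i j
    have h1 : ((Uᵀ * Ω) * W) (tl i) j = (Ω₂ * W) i j := by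
      rw [Matrix.mul_apply, Matrix.mul_apply]
      exact Finset.sum_congr rfl fun c _ => by rw [hUΩ_tl]
    rw [hZb_eq, Matrix.diagonal_mul, h1, hΩ₂W]
    rw [hD1inv, Matrix.mul_diagonal, hF]
    simp [Matrix.of_apply, mul_assoc]
  -- Gram identity
  have hGram : Zbᵀ * Zb = 1 + Fᵀ * F := by
    ext j j'
    rw [Matrix.mul_apply, Matrix.add_apply, Matrix.mul_apply]
    simp only [Matrix.transpose_apply]
    rw [sum_split hkn (fun i => Zb i j * Zb i j')]
    congr 1
    · have : ∀ j₀ : Fin k, Zb (hd j₀) j * Zb (hd j₀) j'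
          = (1 : Matrix (Fin k) (Fin k) ℝ) j₀ j * (1 : Matrix (Fin k) (Fin k) ℝ) j₀ j' := by
        intro j₀; rw [hZb_hd, hZb_hd]
      rw [Finset.sum_congr rfl fun j₀ _ => this j₀]
      simp [Matrix.one_apply, Finset.sum_ite_eq, eq_comm]
    · exact Finset.sum_congr rfl fun i _ => by rw [hZb_tl, hZb_tl]
  -- the inverse Gram matrix
  set SS := (1 + Fᵀ * F)⁻¹ with hSS
  have hFFpsd : (Fᵀ * F).PosSemidef := by
    have := posSemidef_conjTranspose_mul_self F
    rwa [conjTranspose_eq_transpose_of_trivial] at this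
  have hSpd1 : (1 + Fᵀ * F).PosDef := Matrix.PosDef.add_posSemidef Matrix.PosDef.one hFFpsd
  have hSdet : IsUnit (1 + Fᵀ * F).det := (Matrix.isUnit_iff_isUnit_det _).mp hSpd1.isUnit
  have hSmul : (1 + Fᵀ * F) * SS = 1 := Matrix.mul_nonsing_inv _ hSdet
  have hSmul' : SS * (1 + Fᵀ * F) = 1 := Matrix.nonsing_inv_mul _ hSdet
  have hSpd : SS.PosDef := hSpd1.inv
  have hSsym : SSᵀ = SS := transpose_eq_of_herm hSpd.isHermitian
  have hFFsym : (Fᵀ * F)ᵀ = Fᵀ * F := by rw [transpose_mul, transpose_transpose]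
  set Qz := Zb * SS * Zbᵀ with hQz
  have hQzsym : Qzᵀ = Qz := by
    rw [hQz]; exact sandwich_transpose _ _ hSsym
  have hQzidem : Qz * Qz = Qz := by
    have e : Qz * Qz = Zb * ((SS * (Zbᵀ * Zb)) * SS) * Zbᵀ := by
      rw [hQz]; simp only [Matrix.mul_assoc]
    rw [e, hGram, hSmul', Matrix.one_mul, hQz]
  have hQQz : Q * Qz = Qz := by
    rw [hQz, ← Matrix.mul_assoc, ← Matrix.mul_assoc, hQZb]
  have hQzQ : Qz * Q = Qz := by
    have := congrArg Matrix.transpose hQQz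
    rwa [transpose_mul, hQsym, hQzsym] at this
  have hQsub : (Q - Qz).PosSemidef := by
    apply psd_of_symm_idem
    · rw [transpose_sub, hQsym, hQzsym]
    · rw [sub_mul, mul_sub, mul_sub, hQidem, hQQz, hQzQ, hQzidem]
      abel
  -- diagonal entries of Qz
  have hQzent : ∀ x y : Fin n, Qz x y = ∑ c, ∑ c', Zb x c * (SS c c' * Zb y c') := by
    intro x y
    rw [hQz, Matrix.mul_apply]
    simp only [Matrix.mul_apply, Matrix.transpose_apply, Finset.sum_mul]
    rw [Finset.sum_comm]
    exact Finset.sum_congr rfl fun c _ => Finset.sum_congr rfl fun c' _ => by ring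
  have hQz_hd : ∀ j : Fin k, Qz (hd j) (hd j) = SS j j := by
    intro j
    rw [hQzent]
    have : ∀ c : Fin k, (∑ c', Zb (hd j) c * (SS c c' * Zb (hd j) c'))
        = (1 : Matrix (Fin k) (Fin k) ℝ) j c * SS c j := by
      intro c
      rw [Finset.sum_congr rfl fun c' _ => by rw [hZb_hd, hZb_hd]]
      simp [Matrix.one_apply, Finset.sum_ite_eq, eq_comm, mul_comm]
    rw [Finset.sum_congr rfl fun c _ => this c]
    simp [Matrix.one_apply, Finset.sum_ite_eq, eq_comm]
  have hFSF : (F * SS * Fᵀ).PosSemidef := by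
    have := hSpd.posSemidef.mul_mul_conjTranspose_same F
    rwa [conjTranspose_eq_transpose_of_trivial] at this
  have hQz_tl : ∀ i : Fin (n - k), Qz (tl i) (tl i) = (F * SS * Fᵀ) i i := by
    intro i
    rw [hQzent]
    have eR : (F * SS * Fᵀ) i i = ∑ c, ∑ c', F i c * (SS c c' * F i c') := by
      rw [Matrix.mul_apply]
      simp only [Matrix.mul_apply, Matrix.transpose_apply, Finset.sum_mul]
      rw [Finset.sum_comm]
      exact Finset.sum_congr rfl fun c _ => Finset.sum_congr rfl fun c' _ => by ring
    rw [eR]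
    exact Finset.sum_congr rfl fun c _ => Finset.sum_congr rfl fun c' _ => by
      rw [hZb_tl, hZb_tl]
  -- F^T F + S - 1 is PSD
  have hcomm : (Fᵀ * F) * SS = SS * (Fᵀ * F) := by
    calc (Fᵀ * F) * SS = (SS * (1 + Fᵀ * F)) * ((Fᵀ * F) * SS) := by rw [hSmul', Matrix.one_mul]
      _ = SS * ((1 + Fᵀ * F) * (Fᵀ * F)) * SS := by noncomm_ring
      _ = SS * ((Fᵀ * F) * (1 + Fᵀ * F)) * SS := by rw [show (1 + Fᵀ * F) * (Fᵀ * F) = (Fᵀ * F) * (1 + Fᵀ * F) from by noncomm_ring]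
      _ = (SS * (Fᵀ * F)) * ((1 + Fᵀ * F) * SS) := by noncomm_ring
      _ = SS * (Fᵀ * F) := by rw [hSmul, mul_one]
  have hMeq : Fᵀ * F + SS - 1 = (Fᵀ * F) * SS * (Fᵀ * F)ᵀ := by
    have h2 : (Fᵀ * F + SS - 1) * (1 + Fᵀ * F) = (Fᵀ * F) * (Fᵀ * F) := by
      have e : (Fᵀ * F + SS - 1) * (1 + Fᵀ * F)
          = Fᵀ * F + (Fᵀ * F) * (Fᵀ * F) + SS * (1 + Fᵀ * F) - 1 - Fᵀ * F := by noncomm_ring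
      rw [e, hSmul']; abel
    calc Fᵀ * F + SS - 1 = (Fᵀ * F + SS - 1) * ((1 + Fᵀ * F) * SS) := by rw [hSmul, mul_one]
      _ = ((Fᵀ * F + SS - 1) * (1 + Fᵀ * F)) * SS := by noncomm_ring
      _ = (Fᵀ * F) * ((Fᵀ * F) * SS) := by rw [h2]; noncomm_ring
      _ = (Fᵀ * F) * (SS * (Fᵀ * F)) := by rw [hcomm]
      _ = (Fᵀ * F) * SS * (Fᵀ * F)ᵀ := by rw [hFFsym]; noncomm_ring
  have hMpsd : (Fᵀ * F + SS - 1).PosSemidef := by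
    rw [hMeq]
    have := hSpd.posSemidef.mul_mul_conjTranspose_same (Fᵀ * F)
    rwa [conjTranspose_eq_transpose_of_trivial] at this

  -- the square root of A
  set X := apow U lam (1/2 : ℝ) with hXd
  set Dh := diagonal (fun i : Fin n => lam i ^ ((1:ℝ)/2)) with hDh
  have hXeq : X = U * Dh * Uᵀ := by rw [hXd, apow, hDh]
  have hDhDh : Dh * Dh = diagonal lam := by
    rw [hDh, diagonal_mul_diagonal]
    refine congrArg diagonal (funext fun i => ?_)
    rw [← Real.sqrt_eq_rpow, Real.mul_self_sqrt (hlam0 i)]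
  have hXsym : Xᵀ = X := by
    rw [hXeq]; exact sandwich_transpose U Dh (diagonal_transpose _)
  have hXpsd : X.PosSemidef := by
    rw [hXeq]
    have hdpsd : Dh.PosSemidef := by
      rw [hDh]
      exact Matrix.PosSemidef.diagonal (fun i => Real.rpow_nonneg (hlam0 i) _)
    have := hdpsd.mul_mul_conjTranspose_same U
    rwa [conjTranspose_eq_transpose_of_trivial] at this
  have hXX : X * X = A := by
    rw [hXeq, hA]
    calc (U * Dh * Uᵀ) * (U * Dh * Uᵀ) = U * (Dh * (Uᵀ * U) * Dh) * Uᵀ := by noncomm_ring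
      _ = U * diagonal lam * Uᵀ := by rw [hU', mul_one, hDhDh]
  have h1Pt : ((1 : Matrix (Fin n) (Fin n) ℝ) - P)ᵀ = 1 - P := by
    rw [transpose_sub, transpose_one, hP1]
  have h1Pi : ((1 : Matrix (Fin n) (Fin n) ℝ) - P) * (1 - P) = 1 - P := by
    have e : ((1 : Matrix (Fin n) (Fin n) ℝ) - P) * (1 - P) = 1 - P - P + P * P := by
      noncomm_ring
    rw [e, hP2]; abel
  have hdiffpsd : (X * X - Shat * Shat).PosSemidef := by
    rw [hShatsq, hAhat, hXX]
    have e : A - X * P * X = (X * (1 - P)) * (X * (1 - P))ᵀ := by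
      rw [transpose_mul, h1Pt, hXsym]
      calc A - X * P * X = X * X - X * P * X := by rw [hXX]
        _ = X * ((1 - P) * (1 - P)) * X := by rw [h1Pi]; noncomm_ring
        _ = (X * (1 - P)) * ((1 - P) * X) := by noncomm_ring
    rw [e]
    have := posSemidef_self_mul_conjTranspose (X * (1 - P))
    rwa [conjTranspose_eq_transpose_of_trivial] at this
  have hPS := powers_stormer hXpsd hShat hdiffpsd
  have htrA : (X * X).trace = ∑ i, lam i := by
    rw [hXX, hA, trace_conj U hU', trace_diagonal]
  have hAhat2 : Ahat = U * (Dh * Q * Dh) * Uᵀ := by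
    rw [hAhat, hXeq, hQ]; noncomm_ring
  have htrAhat : (Shat * Shat).trace = ∑ i, lam i * Q i i := by
    rw [hShatsq, hAhat2, trace_conj U hU', Matrix.trace]
    apply Finset.sum_congr rfl
    intro i _
    rw [Matrix.diag_apply, hDh, Matrix.mul_diagonal, Matrix.diagonal_mul]
    rw [show lam i ^ ((1:ℝ)/2) * Q i i * lam i ^ ((1:ℝ)/2)
        = (lam i ^ ((1:ℝ)/2) * lam i ^ ((1:ℝ)/2)) * Q i i from by ring]
    rw [← Real.sqrt_eq_rpow, Real.mul_self_sqrt (hlam0 i)]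
  have hfrob1 : frob (X - Shat) ^ 2 = ((X - Shat) * (X - Shat)).trace := by
    rw [frob, Real.sq_sqrt (by positivity)]
    have hsym : (X - Shat)ᵀ = X - Shat := by
      rw [transpose_sub, hXsym, transpose_eq_of_herm hShat.isHermitian]
    simp only [Matrix.trace, Matrix.diag_apply, Matrix.mul_apply]
    apply Finset.sum_congr rfl; intro i _
    apply Finset.sum_congr rfl; intro j _
    have hji : (X - Shat) j i = (X - Shat) i j := by
      conv_lhs => rw [← hsym]
      rw [Matrix.transpose_apply]
    rw [hji, sq]
  have hmain1 : frob (X - Shat) ^ 2 ≤ ∑ i, lam i * (1 - Q i i) := by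
    rw [hfrob1]
    refine le_trans hPS ?_
    rw [htrA, htrAhat, ← Finset.sum_sub_distrib]
    exact le_of_eq (Finset.sum_congr rfl fun i _ => by ring)
  have hmain2 : ∑ i, lam i * (1 - Q i i) ≤ ∑ i, lam i * (1 - Qz i i) := by
    apply Finset.sum_le_sum
    intro i _
    apply mul_le_mul_of_nonneg_left _ (hlam0 i)
    have := psd_diag_nonneg hQsub i
    rw [Matrix.sub_apply] at this
    linarith
  have hhead : ∀ j : Fin k, lam (hd j) * (1 - Qz (hd j) (hd j))
      ≤ lam (hd j) * ((Fᵀ * F) j j) := by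
    intro j
    rw [hQz_hd j]
    apply mul_le_mul_of_nonneg_left _ (hlam0 _)
    have := psd_diag_nonneg hMpsd j
    rw [Matrix.sub_apply, Matrix.add_apply, Matrix.one_apply_eq] at this
    linarith
  have htail : ∀ i : Fin (n - k), lam (tl i) * (1 - Qz (tl i) (tl i)) ≤ lam (tl i) := by
    intro i
    rw [hQz_tl i]
    have h0 := psd_diag_nonneg hFSF i
    nlinarith [hlam0 (tl i)]
  have hmain3 : ∑ i, lam i * (1 - Qz i i)
      ≤ (∑ j : Fin k, lam (hd j) * ((Fᵀ * F) j j)) + ∑ i : Fin (n - k), lam (tl i) := by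
    rw [sum_split hkn (fun i => lam i * (1 - Qz i i))]
    exact add_le_add (Finset.sum_le_sum fun j _ => hhead j)
      (Finset.sum_le_sum fun i _ => htail i)
  set γ : ℝ := lam ⟨k, hkn⟩ / lam ⟨k - 1, by omega⟩ with hγ
  set m : ℕ := 2 * (q - 1) with hm
  have hm1 : m + 1 = 2 * q - 1 := by omega
  have h2e : ε * 2 = ((m + 1 : ℕ) : ℝ) := by
    have hc : ((m + 1 : ℕ) : ℝ) = 2 * (q : ℝ) - 1 := by
      rw [hm1]
      have h1 : (1:ℕ) ≤ 2 * q := by omega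
      push_cast [h1]
      ring
    rw [hε, hc]; ring
  have hkey : ∀ (i : Fin (n - k)) (j : Fin k),
      lam (hd j) * (F i j * F i j) ≤ γ ^ m * (lam (tl i) * G i j ^ 2) := by
    intro i j
    have hF : F i j = lam (tl i) ^ ε * (G i j * lam (hd j) ^ (-ε)) := rfl
    have ha : 0 ≤ lam (tl i) := hlam0 _
    have hb : 0 < lam (hd j) := hlam_hd_pos j
    have ha2 : lam (tl i) ^ ε * lam (tl i) ^ ε = lam (tl i) ^ (m + 1 : ℕ) := by
      rw [← Real.rpow_natCast (lam (tl i)) (m + 1), ← h2e, Real.rpow_mul ha,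
        show (2:ℝ) = ((2:ℕ):ℝ) from by norm_num, Real.rpow_natCast, pow_two]
    have hb2 : lam (hd j) ^ (-ε) * lam (hd j) ^ (-ε) = (lam (hd j) ^ (m + 1 : ℕ))⁻¹ := by
      rw [← Real.rpow_natCast (lam (hd j)) (m + 1), ← h2e, ← Real.rpow_neg hb.le,
        show -(ε * 2) = (-ε) * 2 from by ring, Real.rpow_mul hb.le,
        show (2:ℝ) = ((2:ℕ):ℝ) from by norm_num, Real.rpow_natCast, pow_two]
    have hLHS : lam (hd j) * (F i j * F i j)
        = (lam (tl i) * G i j ^ 2) * (lam (tl i) / lam (hd j)) ^ m := by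
      rw [hF]
      rw [show lam (tl i) ^ ε * (G i j * lam (hd j) ^ (-ε))
            * (lam (tl i) ^ ε * (G i j * lam (hd j) ^ (-ε)))
          = (lam (tl i) ^ ε * lam (tl i) ^ ε) * (G i j * G i j)
            * (lam (hd j) ^ (-ε) * lam (hd j) ^ (-ε)) from by ring, ha2, hb2, div_pow]
      have hbm : lam (hd j) ^ (m + 1 : ℕ) ≠ 0 := pow_ne_zero _ hb.ne'
      have hbm' : lam (hd j) ^ (m : ℕ) ≠ 0 := pow_ne_zero _ hb.ne'
      field_simp
      ring
    have hratio : (lam (tl i) / lam (hd j)) ^ m ≤ γ ^ m := by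
      apply pow_le_pow_left₀ (div_nonneg ha hb.le)
      rw [hγ]
      exact div_le_div₀ (hlam0 ⟨k, hkn⟩) (hlam_tl_le i) hlamk (hlam_hd_ge j)
    rw [hLHS, mul_comm (γ ^ m) _]
    exact mul_le_mul_of_nonneg_left hratio
      (mul_nonneg ha (sq_nonneg _))
  have hFF_entry : ∀ j : Fin k, (Fᵀ * F) j j = ∑ i, F i j * F i j := by
    intro j
    rw [Matrix.mul_apply]
    exact Finset.sum_congr rfl fun i _ => by rw [Matrix.transpose_apply]
  have hheadsum : ∑ j : Fin k, lam (hd j) * ((Fᵀ * F) j j)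
      ≤ γ ^ m * ∑ i : Fin (n - k), ∑ j : Fin k, lam (tl i) * G i j ^ 2 := by
    calc ∑ j : Fin k, lam (hd j) * ((Fᵀ * F) j j)
        = ∑ j : Fin k, ∑ i : Fin (n - k), lam (hd j) * (F i j * F i j) := by
          exact Finset.sum_congr rfl fun j _ => by rw [hFF_entry, Finset.mul_sum]
      _ ≤ ∑ j : Fin k, ∑ i : Fin (n - k), γ ^ m * (lam (tl i) * G i j ^ 2) :=
          Finset.sum_le_sum fun j _ => Finset.sum_le_sum fun i _ => hkey i j
      _ = γ ^ m * ∑ i : Fin (n - k), ∑ j : Fin k, lam (tl i) * G i j ^ 2 := by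
          rw [Finset.sum_comm, Finset.mul_sum]
          exact Finset.sum_congr rfl fun i _ => by rw [Finset.mul_sum]
  have hfrob2 : frob (diagonal (fun i : Fin (n - k) => Real.sqrt (lam (tl i))) * Ω₂ * Pd) ^ 2
      = ∑ i : Fin (n - k), ∑ j : Fin k, lam (tl i) * G i j ^ 2 := by
    rw [frob, Real.sq_sqrt (by positivity)]
    refine Finset.sum_congr rfl fun i _ => Finset.sum_congr rfl fun j _ => ?_
    have hent : (diagonal (fun i : Fin (n - k) => Real.sqrt (lam (tl i))) * Ω₂ * Pd) i j
        = Real.sqrt (lam (tl i)) * G i j := by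
      rw [Matrix.mul_assoc, Matrix.diagonal_mul, hG]
    rw [hent, mul_pow, Real.sq_sqrt (hlam0 _)]
  have hfinal := le_trans hmain1 (le_trans hmain2 hmain3)
  refine le_trans hfinal ?_
  rw [hfrob2]
  linarith [hheadsum]

end FunNystrom
end
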